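/- arXiv:1302.0521 — 9 statements merged into one kernel-verified Lean document; each statement's English description precedes it below -/
import Mathlib

section
/- If a real number x is irrational and its continued fraction expansion is eventually periodic, then x is a quadratic irrational, i.e., x is a root of a quadratic polynomial Ax² + Bx + C with integer coefficients A ≠ 0, B, C. -/
/-- The sequence of complete quotients of the continued fraction algorithm. -/
noncomputable def cfX (x : ℝ) : ℕ → ℝ
  | 0 => x
  | n + 1 =>
    if cfX x n - ⌊cfX x n⌋ = 0 then 0 else 1 / (cfX x n - ⌊cfX x n⌋)

/-- The partial quotients (continued fraction expansion) of a real number. -/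
noncomputable def cfA (x : ℝ) (n : ℕ) : ℤ := ⌊cfX x n⌋

/-!
Shifting to the `k`-th complete quotient `ξ` makes the expansion purely periodic. Irrationals with
the same partial quotients are limits of the same convergents, so `ξ` equals its `p`-th complete
quotient, and the convergent recursion writes it as `ξ = (α ξ + β) / (γ ξ + δ)` with integers
`γ > 0`: a quadratic equation for `ξ`. Walking back from `ξ` to `x` along
`x_n = a_n + 1 / x_{n+1}` keeps `x_n` a root of an integer quadratic; irrationality keeps the
leading coefficient nonzero under inversion.
-/

open GenContFract

section

variable {x : ℝ}

lemma cfX_succ (x : ℝ) (n : ℕ) : cfX x (n + 1) = (Int.fract (cfX x n))⁻¹ := by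
  rw [cfX, Int.fract]
  split_ifs with h <;> simp [h]

lemma cfX_one (x : ℝ) : cfX x 1 = (Int.fract x)⁻¹ :=
  cfX_succ x 0

lemma cfX_add (x : ℝ) (m : ℕ) : ∀ n, cfX x (m + n) = cfX (cfX x m) n
  | 0 => rfl
  | n + 1 => by rw [← add_assoc, cfX_succ, cfX_succ, cfX_add x m n]

lemma cfA_add (x : ℝ) (m n : ℕ) : cfA x (m + n) = cfA (cfX x m) n := by
  rw [cfA, cfA, cfX_add]

lemma cfX_eq_cfA_add_inv (x : ℝ) (n : ℕ) : cfX x n = cfA x n + (cfX x (n + 1))⁻¹ := by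
  rw [cfX_succ, inv_inv, cfA, Int.floor_add_fract]

lemma Irrational.fract (hx : Irrational x) : Irrational (Int.fract x) :=
  hx.sub_intCast ⌊x⌋

lemma irrational_cfX (hx : Irrational x) : ∀ n, Irrational (cfX x n)
  | 0 => hx
  | n + 1 => by rw [cfX_succ]; exact (irrational_cfX hx n).fract.inv

lemma Irrational.fract_pos (hx : Irrational x) : 0 < Int.fract x :=
  (Int.fract_nonneg x).lt_of_ne' hx.fract.ne_zero

lemma one_lt_cfX_succ (hx : Irrational x) (n : ℕ) : 1 < cfX x (n + 1) := by
  rw [cfX_succ]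
  exact one_lt_inv₀ (irrational_cfX hx n).fract_pos |>.mpr (Int.fract_lt_one _)

lemma one_le_cfA_succ (hx : Irrational x) (n : ℕ) : 1 ≤ cfA x (n + 1) :=
  Int.le_floor.mpr (mod_cast (one_lt_cfX_succ hx n).le)

lemma of_s_get?_eq_cfA (hx : Irrational x) (n : ℕ) :
    (GenContFract.of x).s.get? n = some ⟨1, (cfA x (n + 1) : ℝ)⟩ := by
  induction n generalizing x with
  | zero =>
    rw [← Stream'.Seq.head, of_s_head hx.fract.ne_zero, cfA, cfX_succ, cfX]
  | succ n ih =>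
    rw [of_s_succ, ← cfX_one, ih (irrational_cfX hx 1), ← cfA_add, add_comm 1]

lemma eq_of_cfA_eq {y z : ℝ} (hy : Irrational y) (hz : Irrational z)
    (h : ∀ n, cfA y n = cfA z n) : y = z := by
  have hof : GenContFract.of y = GenContFract.of z := by
    ext1
    · rw [of_h_eq_floor, of_h_eq_floor]
      exact_mod_cast h 0
    · exact Stream'.Seq.ext fun n => by rw [of_s_get?_eq_cfA hy, of_s_get?_eq_cfA hz, h]
  exact tendsto_nhds_unique (of_convergence y) (hof ▸ of_convergence z)

/-- `α / γ` and `β / δ` are the last two convergents `p_n / q_n` and `p_{n-1} / q_{n-1}`. -/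
lemma exists_mul_cfX_succ_eq (hx : Irrational x) :
    ∀ n : ℕ, ∃ α β γ δ : ℤ, 0 < γ ∧ 0 ≤ δ ∧
      x * (γ * cfX x (n + 1) + δ) = α * cfX x (n + 1) + β
  | 0 => ⟨cfA x 0, 1, 1, 0, one_pos, le_rfl, by
      have hξ : cfX x 1 ≠ 0 := (irrational_cfX hx 1).ne_zero
      have h0 : x = cfA x 0 + (cfX x 1)⁻¹ := cfX_eq_cfA_add_inv x 0
      field_simp at h0
      push_cast
      linear_combination h0⟩
  | n + 1 => by
    obtain ⟨α, β, γ, δ, hγ, hδ, h⟩ := exists_mul_cfX_succ_eq hx n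
    have ha := one_le_cfA_succ hx n
    have hξ : cfX x (n + 2) ≠ 0 := (irrational_cfX hx (n + 2)).ne_zero
    refine ⟨α * cfA x (n + 1) + β, α, γ * cfA x (n + 1) + δ, γ, by nlinarith, hγ.le, ?_⟩
    rw [cfX_eq_cfA_add_inv x (n + 1)] at h
    push_cast
    field_simp at h
    linear_combination h

def IsIntQuadraticRoot (x : ℝ) : Prop :=
  ∃ A B C : ℤ, A ≠ 0 ∧ (A : ℝ) * x ^ 2 + B * x + C = 0

lemma IsIntQuadraticRoot.add_intCast (h : IsIntQuadraticRoot x) (m : ℤ) :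
    IsIntQuadraticRoot (x + m) := by
  obtain ⟨A, B, C, hA, hx⟩ := h
  refine ⟨A, B - 2 * A * m, A * m ^ 2 - B * m + C, hA, ?_⟩
  push_cast
  linear_combination hx

lemma IsIntQuadraticRoot.inv (h : IsIntQuadraticRoot x) (hx : Irrational x) :
    IsIntQuadraticRoot x⁻¹ := by
  obtain ⟨A, B, C, hA, hroot⟩ := h
  have hC : C ≠ 0 := by
    rintro rfl
    have hlin : (A : ℝ) * x + B = 0 :=
      (mul_eq_zero.mp (by linear_combination hroot : x * ((A : ℝ) * x + B) = 0)).resolve_left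
        hx.ne_zero
    exact hx.ne_rat (-B / A) (by push_cast; field_simp; linear_combination hlin)
  refine ⟨C, B, A, hC, ?_⟩
  have := hx.ne_zero
  field_simp
  linear_combination hroot

lemma IsIntQuadraticRoot.of_cfX (hx : Irrational x) :
    ∀ {n : ℕ}, IsIntQuadraticRoot (cfX x n) → IsIntQuadraticRoot x
  | 0, h => h
  | n + 1, h => by
    have hfract := (h.inv (irrational_cfX hx (n + 1))).add_intCast ⌊cfX x n⌋
    rw [cfX_succ, inv_inv, Int.fract_add_floor] at hfract
    exact IsIntQuadraticRoot.of_cfX hx hfract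

lemma isIntQuadraticRoot_of_cfA_add_eq (hx : Irrational x) {p : ℕ} (hp : 0 < p)
    (hper : ∀ n, cfA x (n + p) = cfA x n) : IsIntQuadraticRoot x := by
  have hfix : cfX x p = x :=
    eq_of_cfA_eq (irrational_cfX hx p) hx fun n => by rw [← cfA_add, add_comm, hper]
  obtain ⟨α, β, γ, δ, hγ, -, h⟩ := exists_mul_cfX_succ_eq hx (p - 1)
  rw [Nat.sub_add_cancel hp, hfix] at h
  exact ⟨γ, δ - α, -β, hγ.ne', by push_cast; linear_combination h⟩

end

/-- Eventually periodic continued fraction of an irrational implies quadratic irrational. -/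
theorem eventually_periodic_cf_quadratic (x : ℝ) (hx : Irrational x)
    (hper : ∃ k p : ℕ, 1 ≤ p ∧ ∀ n : ℕ, k ≤ n → cfA x (n + p) = cfA x n) :
    ∃ A B C : ℤ, A ≠ 0 ∧ (A : ℝ) * x ^ 2 + (B : ℝ) * x + (C : ℝ) = 0 := by
  obtain ⟨k, p, hp, hper⟩ := hper
  have hpure : ∀ n, cfA (cfX x k) (n + p) = cfA (cfX x k) n := fun n => by
    rw [← cfA_add, ← cfA_add, ← add_assoc, hper _ (Nat.le_add_right k n)]
  exact IsIntQuadraticRoot.of_cfX hx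
    (isIntQuadraticRoot_of_cfA_add_eq (irrational_cfX hx k) hp hpure)
end

section
/- If x > 0 is the real number whose continued fraction is [n; a₁, …, a_r, 2n repeated] with a₁…a_r a palindrome of positive integers and n a positive integer, then x² is a rational number; explicitly x² = n² + (2n·K_{r-1}(a₁,…,a_{r-1}) + K_{r-2}(a₂,…,a_{r-1})) / K_r(a₁,…,a_r). -/
/-- `contP f m` is the continuant `K_{m-1}(f 1, …, f (m-1))`; so `contP f 0 = K₋₁ = 0`,
`contP f 1 = K₀ = 1`, and `K_m(f 1, …, f m) = contP f (m+1)`. -/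
noncomputable def contP (f : ℕ → ℝ) : ℕ → ℝ
  | 0 => 0
  | 1 => 1
  | m + 2 => contP f m + f (m + 1) * contP f (m + 1)


@[simp] lemma contP_zero (f : ℕ → ℝ) : contP f 0 = 0 := rfl
@[simp] lemma contP_one (f : ℕ → ℝ) : contP f 1 = 1 := rfl
lemma contP_two (f : ℕ → ℝ) : contP f 2 = f 1 := by simp [contP]
lemma contP_rec (f : ℕ → ℝ) (m : ℕ) :
    contP f (m + 2) = contP f m + f (m + 1) * contP f (m + 1) := rfl

lemma contP_congr : ∀ (k : ℕ) (f g : ℕ → ℝ), (∀ i, 1 ≤ i → i < k → f i = g i) →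
    contP f k = contP g k := by
  intro k
  induction k using Nat.twoStepInduction with
  | zero => intro f g _; rfl
  | one => intro f g _; rfl
  | more k ih1 ih2 =>
    intro f g h
    rw [contP_rec, contP_rec, ih1 f g (fun i h1 h2 => h i h1 (by omega)),
      ih2 f g (fun i h1 h2 => h i h1 (by omega)), h (k+1) (by omega) (by omega)]

lemma contP_front : ∀ (m : ℕ) (f : ℕ → ℝ),
    contP f (m + 2) = f 1 * contP (fun i => f (i + 1)) (m + 1)
      + contP (fun i => f (i + 2)) m := by
  intro m
  induction m using Nat.twoStepInduction with
  | zero => intro f; simp [contP_two, contP]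
  | one => intro f; simp [contP_rec, contP_two]; ring
  | more m ih1 ih2 =>
    intro f
    rw [contP_rec f (m+2), ih1 f, ih2 f, contP_rec (fun i => f (i+1)) (m+1),
      contP_rec (fun i => f (i+2)) m]
    ring

lemma contP_rev : ∀ (k : ℕ) (f : ℕ → ℝ), contP (fun i => f (k - i)) k = contP f k := by
  intro k
  induction k using Nat.twoStepInduction with
  | zero => intro f; rfl
  | one => intro f; rfl
  | more k ih1 ih2 =>
    intro f
    rw [contP_front k (fun i => f (k + 2 - i))]
    have e1 : (fun i => f (k + 2 - (i + 1))) = (fun i => f (k + 1 - i)) := by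
      funext i; congr 1; try omega
    have e2 : (fun i => f (k + 2 - (i + 2))) = (fun i => f (k - i)) := by
      funext i; congr 1; try omega
    rw [e1, e2, ih2 f, ih1 f, contP_rec]
    norm_num
    ring

lemma contP_bounds (f : ℕ → ℝ) (hf : ∀ i, 1 ≤ i → 1 ≤ f i) :
    ∀ k, (1 ≤ contP f (k + 1) ∧ (k : ℝ) ≤ contP f (k + 1)) ∧ 0 ≤ contP f k := by
  have key : ∀ k, ((1 ≤ contP f (k + 1) ∧ (k : ℝ) ≤ contP f (k + 1)) ∧ 0 ≤ contP f k) ∧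
      ((1 ≤ contP f (k + 2) ∧ ((k:ℝ) + 1) ≤ contP f (k + 2)) ∧ 0 ≤ contP f (k+1)) := by
    intro k
    induction k with
    | zero =>
      refine ⟨⟨⟨le_refl 1, by norm_num⟩, le_refl 0⟩, ⟨⟨?_, ?_⟩, by norm_num⟩⟩ <;>
        simp [contP_two] <;> exact_mod_cast hf 1 le_rfl
    | succ k ih =>
      obtain ⟨⟨⟨h1, h2⟩, h3⟩, ⟨h4, h5⟩, h6⟩ := ih
      refine ⟨⟨⟨h4, by push_cast; linarith⟩, h6⟩, ⟨?_, ?_⟩, by linarith⟩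
      · have := hf (k+2) (by omega)
        rw [contP_rec]
        nlinarith
      · have := hf (k+2) (by omega)
        rw [contP_rec]
        push_cast
        nlinarith
  exact fun k => (key k).1

lemma cfX_shift (x : ℝ) (m : ℕ) : ∀ k, cfX (cfX x m) k = cfX x (m + k) := by
  intro k
  induction k with
  | zero => rfl
  | succ k ih => show (if _ then _ else _) = cfX x (m + k + 1); rw [ih]; rfl

/-- key step facts for a real all of whose partial quotients from index 1 on are ≥ 1 -/
lemma cf_step (y : ℝ) (hA : ∀ k, 1 ≤ k → 1 ≤ cfA y k) (k : ℕ) :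
    (cfX y k - ⌊cfX y k⌋ ≠ 0) ∧ cfX y (k + 1) * (cfX y k - ⌊cfX y k⌋) = 1 := by
  have hne : cfX y k - ⌊cfX y k⌋ ≠ 0 := by
    intro h
    have : cfX y (k + 1) = 0 := by
      show (if cfX y k - ⌊cfX y k⌋ = 0 then (0:ℝ) else 1 / (cfX y k - ⌊cfX y k⌋)) = 0
      rw [if_pos h]
    have h2 := hA (k + 1) (by omega)
    rw [cfA, this] at h2
    norm_num at h2
  refine ⟨hne, ?_⟩
  show (if cfX y k - ⌊cfX y k⌋ = 0 then (0:ℝ) else 1 / (cfX y k - ⌊cfX y k⌋)) * _ = 1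
  rw [if_neg hne]
  field_simp

lemma cfX_ge_one (y : ℝ) (hA : ∀ k, 1 ≤ k → 1 ≤ cfA y k) (k : ℕ) : 1 ≤ cfX y (k + 1) := by
  have h1 := hA (k + 1) (by omega)
  have h2 : ((1:ℤ) : ℝ) ≤ (⌊cfX y (k+1)⌋ : ℝ) := by exact_mod_cast h1
  have := Int.floor_le (cfX y (k + 1))
  push_cast at h2
  linarith

/-- numerator convergents p_{k-1} -/
noncomputable def pn (b : ℕ → ℝ) (k : ℕ) : ℝ := contP (fun i => b (i - 1)) (k + 1)

@[simp] lemma pn_zero (b : ℕ → ℝ) : pn b 0 = 1 := rfl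
@[simp] lemma pn_one (b : ℕ → ℝ) : pn b 1 = b 0 := by simp [pn, contP_two]
lemma pn_rec (b : ℕ → ℝ) (k : ℕ) : pn b (k + 2) = pn b k + b (k + 1) * pn b (k + 1) := by
  simp [pn, contP_rec]

lemma det_pq (b : ℕ → ℝ) : ∀ k, pn b (k + 1) * contP b k - pn b k * contP b (k + 1)
    = (-1) ^ (k + 1) := by
  intro k
  induction k with
  | zero => simp
  | succ k ih => rw [pn_rec, contP_rec]; push_cast; ring_nf; ring_nf at ih; linarith

/-- the fundamental identity relating y to its complete quotients and convergents -/
lemma cf_identity (y : ℝ) (hA : ∀ k, 1 ≤ k → 1 ≤ cfA y k) :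
    ∀ k, y * (contP (fun i => (cfA y i : ℝ)) (k + 1) * cfX y (k + 1)
        + contP (fun i => (cfA y i : ℝ)) k)
      = pn (fun i => (cfA y i : ℝ)) (k + 1) * cfX y (k + 1)
        + pn (fun i => (cfA y i : ℝ)) k := by
  set c : ℕ → ℝ := fun i => (cfA y i : ℝ) with hc
  intro k
  induction k with
  | zero =>
    have h := (cf_step y hA 0).2
    have hc0 : c 0 = (⌊y⌋ : ℝ) := rfl
    have h1 : cfX y 0 = y := rfl
    rw [h1] at h
    simp only [contP_zero, contP_one, pn_zero, pn_one, hc0, zero_add, one_mul]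
    linear_combination h
  | succ k ih =>
    have h := (cf_step y hA (k + 1)).2
    have hck : c (k + 1) = (⌊cfX y (k+1)⌋ : ℝ) := rfl
    -- cfX y (k+1) * cfX y (k+2) = c (k+1) * cfX y (k+2) + 1
    have hprod : cfX y (k + 1) * cfX y (k + 2) = c (k + 1) * cfX y (k + 2) + 1 := by
      rw [hck]; nlinarith [h]
    rw [contP_rec, pn_rec]
    linear_combination cfX y (k + 2) * ih
      - (y * contP c (k + 1) - pn c (k + 1)) * hprod

lemma cf_unique (y z : ℝ) (hyz : ∀ k, cfA y k = cfA z k)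
    (hA : ∀ k, 1 ≤ k → 1 ≤ cfA y k) : y = z := by
  set c : ℕ → ℝ := fun i => (cfA y i : ℝ) with hc
  have hAz : ∀ k, 1 ≤ k → 1 ≤ cfA z k := fun k hk => (hyz k) ▸ hA k hk
  have hcz : (fun i => ((cfA z i : ℤ) : ℝ)) = c := funext fun i => by rw [hc]; exact_mod_cast congrArg _ (hyz i).symm
  have hfc : ∀ i, 1 ≤ i → 1 ≤ c i := fun i hi => by
    show (1:ℝ) ≤ (cfA y i : ℝ); exact_mod_cast hA i hi
  have bounds := contP_bounds c hfc
  have key : ∀ k : ℕ, |y - z| * (k : ℝ) ^ 2 ≤ 1 := by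
    intro k
    have hy := cf_identity y hA k
    have hz := cf_identity z hAz k
    rw [hcz] at hz
    rw [← hc] at hy
    set Y := cfX y (k + 1)
    set Z := cfX z (k + 1)
    set Q1 := contP c (k + 1)
    set Q0 := contP c k
    set P1 := pn c (k + 1)
    set P0 := pn c k
    have hdet : P1 * Q0 - P0 * Q1 = (-1 : ℝ) ^ (k + 1) := det_pq c k
    have hQ1a : 1 ≤ Q1 := (bounds k).1.1
    have hQ1b : (k : ℝ) ≤ Q1 := (bounds k).1.2
    have hQ0 : 0 ≤ Q0 := (bounds k).2
    have hY : 1 ≤ Y := cfX_ge_one y hA k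
    have hZ : 1 ≤ Z := cfX_ge_one z hAz k
    have heq : (y - z) * ((Q1 * Y + Q0) * (Q1 * Z + Q0)) = (Y - Z) * (P1 * Q0 - P0 * Q1) := by
      linear_combination (Q1 * Z + Q0) * hy - (Q1 * Y + Q0) * hz
    have habs : |y - z| * ((Q1 * Y + Q0) * (Q1 * Z + Q0)) = |Y - Z| := by
      have h1 := congrArg abs heq
      rw [hdet] at h1
      simp only [abs_mul, abs_pow, abs_neg, abs_one, one_pow, mul_one] at h1
      rw [abs_of_nonneg (show (0:ℝ) ≤ Q1 * Y + Q0 by nlinarith),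
        abs_of_nonneg (show (0:ℝ) ≤ Q1 * Z + Q0 by nlinarith)] at h1
      exact h1
    have hYZ : |Y - Z| ≤ Y * Z := by
      rw [abs_sub_le_iff]
      constructor <;> nlinarith
    have hQ1nn : (0:ℝ) ≤ Q1 := by linarith
    have hknn : (0:ℝ) ≤ (k:ℝ) := Nat.cast_nonneg k
    have hk2 : (k:ℝ)^2 ≤ Q1^2 := by nlinarith
    have hYZnn : (0:ℝ) ≤ Y * Z := by nlinarith
    have hD : (k : ℝ) ^ 2 * (Y * Z) ≤ (Q1 * Y + Q0) * (Q1 * Z + Q0) := by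
      calc (k : ℝ) ^ 2 * (Y * Z) ≤ Q1 ^ 2 * (Y * Z) := mul_le_mul_of_nonneg_right hk2 hYZnn
        _ ≤ (Q1 * Y + Q0) * (Q1 * Z + Q0) := by
            have hYnn : (0:ℝ) ≤ Y := by linarith
            have hZnn : (0:ℝ) ≤ Z := by linarith
            nlinarith [mul_nonneg (mul_nonneg hQ1nn hYnn) hQ0,
              mul_nonneg (mul_nonneg hQ1nn hZnn) hQ0, mul_nonneg hQ0 hQ0]
    have h2 : |y - z| * ((k : ℝ) ^ 2 * (Y * Z)) ≤ Y * Z := by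
      calc |y - z| * ((k : ℝ) ^ 2 * (Y * Z)) ≤ |y - z| * ((Q1 * Y + Q0) * (Q1 * Z + Q0)) :=
            mul_le_mul_of_nonneg_left hD (abs_nonneg (y - z))
        _ = |Y - Z| := habs
        _ ≤ Y * Z := hYZ
    have hYZpos : (0:ℝ) < Y * Z :=
      mul_pos (show (0:ℝ) < Y by linarith) (show (0:ℝ) < Z by linarith)
    have h3 : (|y - z| * (k:ℝ) ^ 2) * (Y * Z) ≤ 1 * (Y * Z) := by
      calc (|y - z| * (k:ℝ) ^ 2) * (Y * Z) = |y - z| * ((k:ℝ) ^ 2 * (Y * Z)) := by ring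
        _ ≤ Y * Z := h2
        _ = 1 * (Y * Z) := by ring
    exact le_of_mul_le_mul_right h3 hYZpos
  by_contra hne
  have hpos : 0 < |y - z| := abs_pos.mpr (sub_ne_zero.mpr hne)
  obtain ⟨k, hk⟩ := exists_nat_gt (1 / |y - z|)
  have h1 : (0:ℝ) < 1 / |y - z| := by positivity
  have hk0 : (1:ℝ) ≤ (k:ℝ) := by
    have h2 : (0:ℝ) < (k:ℝ) := lt_trans h1 hk
    exact_mod_cast Nat.succ_le_of_lt (by exact_mod_cast h2)
  have := key k
  have h2 : 1 < |y - z| * k := by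
    rw [div_lt_iff₀ hpos] at hk
    linarith [mul_comm (1/|y-z|) |y-z|]
  nlinarith

def contPZ (f : ℕ → ℤ) : ℕ → ℤ
  | 0 => 0
  | 1 => 1
  | m + 2 => contPZ f m + f (m + 1) * contPZ f (m + 1)

lemma contPZ_cast (f : ℕ → ℤ) : ∀ k, ((contPZ f k : ℤ) : ℝ) = contP (fun i => (f i : ℝ)) k := by
  intro k
  induction k using Nat.twoStepInduction with
  | zero => simp [contPZ]
  | one => simp [contPZ]
  | more k ih1 ih2 =>
    show ((contPZ f k + f (k+1) * contPZ f (k+1) : ℤ) : ℝ) = _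
    rw [contP_rec]
    push_cast
    rw [ih1, ih2]

lemma cfA_shift (x : ℝ) (m k : ℕ) : cfA (cfX x m) k = cfA x (m + k) := by
  unfold cfA
  rw [cfX_shift]


/-- If `x > 0` has continued fraction `[n; a₁,…,a_r, 2n repeated]` with `a₁…a_r` a
palindrome of positive integers, then `x²` is rational and
`x² = n² + (2n·K_{r-1}(a₁,…,a_{r-1}) + K_{r-2}(a₂,…,a_{r-1})) / K_r(a₁,…,a_r)`. -/
theorem palindromic_cf_sq_rational (n r : ℕ) (hn : 0 < n) (hr : 1 ≤ r)
    (a : ℕ → ℤ) (hapos : ∀ i : ℕ, 1 ≤ i → i ≤ r → 0 < a i)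
    (hpal : ∀ i : ℕ, 1 ≤ i → i ≤ r → a i = a (r + 1 - i))
    (x : ℝ) (hx : 0 < x)
    (h0 : cfA x 0 = n)
    (hvals : ∀ i : ℕ, 1 ≤ i → i ≤ r → cfA x i = a i)
    (hlast : cfA x (r + 1) = 2 * n)
    (hper : ∀ m : ℕ, 1 ≤ m → cfA x (m + (r + 1)) = cfA x m) :
    (∃ q : ℚ, x ^ 2 = (q : ℝ)) ∧
      x ^ 2 = (n : ℝ) ^ 2 +
        (2 * (n : ℝ) * contP (fun i => (a i : ℝ)) r
          + contP (fun i => (a (i + 1) : ℝ)) (r - 1))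
        / contP (fun i => (a i : ℝ)) (r + 1) := by
  -- all partial quotients from index 1 on are positive
  have hcpos : ∀ k : ℕ, 1 ≤ k → 1 ≤ cfA x k := by
    intro k
    induction k using Nat.strong_induction_on with
    | _ k ih =>
      intro hk
      rcases lt_trichotomy k (r + 1) with h | h | h
      · have hkr : k ≤ r := by omega
        rw [hvals k hk hkr]
        have := hapos k hk hkr
        omega
      · rw [h, hlast]; omega
      · have hm := hper (k - (r + 1)) (by omega)
        rw [show (k - (r + 1)) + (r + 1) = k by omega] at hm
        rw [hm]
        exact ih (k - (r + 1)) (by omega) (by omega)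
  set cR : ℕ → ℝ := fun i => (cfA x i : ℝ) with hcR
  set aR : ℕ → ℝ := fun i => (a i : ℝ) with haR
  -- the tail after the period equals the tail after position 0
  have hXeq : cfX x (r + 2) = cfX x 1 := by
    apply cf_unique
    · intro k
      rw [cfA_shift, cfA_shift]
      have := hper (k + 1) (by omega)
      rw [show (k + 1) + (r + 1) = r + 2 + k by omega] at this
      rw [this]; congr 1; omega
    · intro k _
      rw [cfA_shift]
      exact hcpos (r + 2 + k) (by omega)
  -- fundamental identity at step r+1
  have hid := cf_identity x hcpos (r + 1)
  rw [show r + 1 + 1 = r + 2 from rfl, hXeq, ← hcR] at hid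
  -- the first complete quotient
  have hX1 : cfX x 1 * (x - (n : ℝ)) = 1 := by
    have h := (cf_step x hcpos 0).2
    have hfl : ((⌊x⌋ : ℤ) : ℝ) = (n : ℝ) := by exact_mod_cast congrArg (fun z : ℤ => (z : ℝ)) h0
    rw [show cfX x 0 = x from rfl] at h
    rw [hfl] at h
    exact h
  obtain ⟨s, rfl⟩ : ∃ s, r = s + 1 := ⟨r - 1, by omega⟩
  set r := s + 1
  set A := contP cR (r + 1) with hA
  set B := contP cR r with hB
  set B' := contP (fun i => cR (i + 1)) r with hB'
  set Cc := contP (fun i => cR (i + 1)) s with hCc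
  have hcR2n : cR (r + 1) = 2 * (n : ℝ) := by
    show ((cfA x (r+1) : ℤ) : ℝ) = _
    rw [hlast]; push_cast; ring
  have hcR0 : cR 0 = (n : ℝ) := by
    show ((cfA x 0 : ℤ) : ℝ) = _
    rw [h0]; push_cast; ring
  have F2 : contP cR (r + 2) = B + 2 * (n : ℝ) * A := by
    rw [contP_rec, hcR2n, ← hB, ← hA]; try ring
  have F3 : pn cR (r + 2) = pn cR r + 2 * (n : ℝ) * pn cR (r + 1) := by
    rw [pn_rec, hcR2n]; try ring
  have e1 : (fun i => cR (i + 1 - 1)) = cR := by funext i; congr 1; try omega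
  have e2 : (fun i => cR (i + 2 - 1)) = (fun i => cR (i + 1)) := by funext i; congr 1; try omega
  have F4 : pn cR (r + 1) = (n : ℝ) * A + B' := by
    have h := contP_front r (fun i => cR (i - 1))
    rw [e1, e2] at h
    show contP (fun i => cR (i - 1)) (r + 2) = _
    rw [h, show (1:ℕ) - 1 = 0 from rfl, hcR0, ← hA, ← hB']
  have F5 : pn cR r = (n : ℝ) * B + Cc := by
    have h := contP_front s (fun i => cR (i - 1))
    rw [e1, e2] at h
    show contP (fun i => cR (i - 1)) (r + 1) = _
    rw [show r + 1 = s + 2 from rfl, h, show (1:ℕ) - 1 = 0 from rfl, hcR0,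
      show contP cR (s + 1) = B from rfl, ← hCc]
  have gB : contP aR r = B := by
    rw [hB]
    apply contP_congr
    intro i h1 h2
    show ((a i : ℤ) : ℝ) = ((cfA x i : ℤ) : ℝ)
    rw [hvals i h1 (by omega)]
  have F6 : B' = B := by
    have s1 : B' = contP (fun i => aR (i + 1)) r := by
      rw [hB']
      apply contP_congr
      intro i h1 h2
      show ((cfA x (i + 1) : ℤ) : ℝ) = ((a (i + 1) : ℤ) : ℝ)
      rw [hvals (i + 1) (by omega) (by omega)]
    have s2 : contP (fun i => aR (i + 1)) r = contP (fun i => aR (r - i)) r := by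
      apply contP_congr
      intro i h1 h2
      show ((a (i + 1) : ℤ) : ℝ) = ((a (r - i) : ℤ) : ℝ)
      rw [hpal (i + 1) (by omega) (by omega), show r + 1 - (i + 1) = r - i by omega]
    have s3 : contP (fun i => aR (r - i)) r = contP aR r := contP_rev r aR
    rw [s1, s2, s3, gB]
  rw [F2, F3, F4, F5, F6] at hid
  have hquad : A * x ^ 2 = (n : ℝ) ^ 2 * A + 2 * (n : ℝ) * B + Cc := by
    linear_combination (x - (n : ℝ)) * hid +
      (((n : ℝ) * B + Cc) + 2 * (n : ℝ) * ((n : ℝ) * A + B) - x * (B + 2 * (n : ℝ) * A)) * hX1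
  have hfcR : ∀ i, 1 ≤ i → 1 ≤ cR i := fun i hi => by
    show (1 : ℝ) ≤ ((cfA x i : ℤ) : ℝ)
    exact_mod_cast hcpos i hi
  have hA1 : (1 : ℝ) ≤ A := (contP_bounds cR hfcR r).1.1
  have hAne : A ≠ 0 := by intro h; rw [h] at hA1; norm_num at hA1
  have gA : contP aR (r + 1) = A := by
    rw [hA]
    apply contP_congr
    intro i h1 h2
    show ((a i : ℤ) : ℝ) = ((cfA x i : ℤ) : ℝ)
    rw [hvals i h1 (by omega)]
  have gC : contP (fun i => aR (i + 1)) s = Cc := by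
    rw [hCc]
    apply contP_congr
    intro i h1 h2
    show ((a (i + 1) : ℤ) : ℝ) = ((cfA x (i + 1) : ℤ) : ℝ)
    rw [hvals (i + 1) (by omega) (by omega)]
  have hmain : x ^ 2 = (n : ℝ) ^ 2 +
      (2 * (n : ℝ) * contP aR r + contP (fun i => aR (i + 1)) (r - 1)) / contP aR (r + 1) := by
    rw [gA, gB, show r - 1 = s from rfl, gC]
    field_simp
    linear_combination hquad
  refine ⟨⟨(n : ℚ) ^ 2 + (2 * (n : ℚ) * (contPZ a r : ℚ) +
      (contPZ (fun i => a (i + 1)) (r - 1) : ℚ)) / (contPZ a (r + 1) : ℚ), ?_⟩, ?_⟩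
  · push_cast
    rw [contPZ_cast a r, contPZ_cast (fun i => a (i + 1)) (r - 1), contPZ_cast a (r + 1), ← haR]
    convert hmain using 2
  · exact hmain
end

section
/- Let n be an odd positive integer with n ≥ 3. Then the continued fraction of √(n²+4) is [n; (n-1)/2, 1, 1, (n-1)/2, 2n repeated], so its period has length 5. -/
lemma cfX_succ_s11 (x : ℝ) (j : ℕ) : cfX x (j + 1) =
    if cfX x j - ⌊cfX x j⌋ = 0 then 0 else 1 / (cfX x j - ⌊cfX x j⌋) := rfl

set_option maxHeartbeats 1000000 in
/-- For odd `n ≥ 3`, `√(n²+4) = [n; (n-1)/2, 1, 1, (n-1)/2, 2n repeated]`,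
with period of length 5. -/
theorem sqrt_sq_add_four_odd (n : ℕ) (hn : 3 ≤ n) (hodd : Odd n) :
    cfA (Real.sqrt ((n : ℝ) ^ 2 + 4)) 0 = n ∧
    (∀ k : ℕ,
      cfA (Real.sqrt ((n : ℝ) ^ 2 + 4)) (5 * k + 1) = ((n - 1) / 2 : ℕ) ∧
      cfA (Real.sqrt ((n : ℝ) ^ 2 + 4)) (5 * k + 2) = 1 ∧
      cfA (Real.sqrt ((n : ℝ) ^ 2 + 4)) (5 * k + 3) = 1 ∧
      cfA (Real.sqrt ((n : ℝ) ^ 2 + 4)) (5 * k + 4) = ((n - 1) / 2 : ℕ) ∧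
      cfA (Real.sqrt ((n : ℝ) ^ 2 + 4)) (5 * k + 5) = 2 * n) ∧
    sInf {p : ℕ | 0 < p ∧ ∀ m : ℕ, 1 ≤ m →
      cfA (Real.sqrt ((n : ℝ) ^ 2 + 4)) (m + p) = cfA (Real.sqrt ((n : ℝ) ^ 2 + 4)) m} = 5 := by
  obtain ⟨m, hm⟩ := hodd
  set s := Real.sqrt ((n : ℝ) ^ 2 + 4) with hsdef
  have hs2 : s ^ 2 = (n : ℝ) ^ 2 + 4 := Real.sq_sqrt (by positivity)
  have hsnn : 0 ≤ s := Real.sqrt_nonneg _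
  have hn3 : (3 : ℝ) ≤ (n : ℝ) := by exact_mod_cast hn
  have hlb : (n : ℝ) < s := by nlinarith
  have hub : s < (n : ℝ) + 1 := by nlinarith
  have hnpos : (0:ℝ) < n := by linarith
  have hmr : (n : ℝ) = 2 * (m:ℝ) + 1 := by rw [hm]; push_cast; ring
  -- floors
  have f0 : ⌊s⌋ = (n:ℤ) := by
    rw [Int.floor_eq_iff]; push_cast; constructor <;> linarith
  have f1 : ⌊(s + n)/4⌋ = (m:ℤ) := by
    rw [Int.floor_eq_iff]; push_cast
    constructor
    · rw [le_div_iff₀ (by norm_num : (0:ℝ) < 4)]; nlinarith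
    · rw [div_lt_iff₀ (by norm_num : (0:ℝ) < 4)]; nlinarith
  have f2 : ⌊(s + n - 2)/n⌋ = 1 := by
    rw [Int.floor_eq_iff]; push_cast
    constructor
    · rw [le_div_iff₀ hnpos]; nlinarith
    · rw [div_lt_iff₀ hnpos]; nlinarith
  have f3 : ⌊(s + 2)/n⌋ = 1 := by
    rw [Int.floor_eq_iff]; push_cast
    constructor
    · rw [le_div_iff₀ hnpos]; nlinarith
    · rw [div_lt_iff₀ hnpos]; nlinarith
  have f4 : ⌊(s + n - 2)/4⌋ = (m:ℤ) := by
    rw [Int.floor_eq_iff]; push_cast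
    constructor
    · rw [le_div_iff₀ (by norm_num : (0:ℝ) < 4)]; nlinarith
    · rw [div_lt_iff₀ (by norm_num : (0:ℝ) < 4)]; nlinarith
  have f5 : ⌊s + (n:ℝ)⌋ = 2*(n:ℤ) := by
    rw [Int.floor_eq_iff]; push_cast; constructor <;> linarith
  -- fractional parts are nonzero
  have d0 : s - ((n:ℤ):ℝ) ≠ 0 := by push_cast; nlinarith
  have d1 : (s + n)/4 - ((m:ℤ):ℝ) ≠ 0 := by push_cast; nlinarith
  have d2 : (s + n - 2)/n - ((1:ℤ):ℝ) ≠ 0 := by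
    push_cast
    have : (1:ℝ) < (s + n - 2)/n := by rw [lt_div_iff₀ hnpos]; nlinarith
    linarith
  have d3 : (s + 2)/n - ((1:ℤ):ℝ) ≠ 0 := by
    push_cast
    have : (1:ℝ) < (s + 2)/n := by rw [lt_div_iff₀ hnpos]; nlinarith
    linarith
  have d4 : (s + n - 2)/4 - ((m:ℤ):ℝ) ≠ 0 := by push_cast; nlinarith
  have d5 : s + (n:ℝ) - (((2*(n:ℤ) : ℤ)) : ℝ) ≠ 0 := by push_cast; nlinarith
  -- transitions
  have t0 : 1/(s - ((n:ℤ):ℝ)) = (s + n)/4 := by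
    push_cast; rw [div_eq_div_iff (by nlinarith) (by norm_num)]
    linear_combination -hs2
  have t1 : 1/((s + n)/4 - ((m:ℤ):ℝ)) = (s + n - 2)/n := by
    push_cast
    have h : (s + n)/4 - (m:ℝ) = (s - n + 2)/4 := by rw [hmr]; ring
    rw [h, one_div_div, div_eq_div_iff (ne_of_gt (by nlinarith)) (ne_of_gt hnpos)]
    linear_combination -hs2
  have t2 : 1/((s + n - 2)/n - ((1:ℤ):ℝ)) = (s + 2)/n := by
    push_cast
    have h : (s + n - 2)/n - 1 = (s - 2)/n := by field_simp; ring
    rw [h, one_div_div, div_eq_div_iff (ne_of_gt (by nlinarith)) (ne_of_gt hnpos)]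
    linear_combination -hs2
  have t3 : 1/((s + 2)/n - ((1:ℤ):ℝ)) = (s + n - 2)/4 := by
    push_cast
    have h : (s + 2)/n - 1 = (s + 2 - n)/n := by field_simp
    rw [h, one_div_div, div_eq_div_iff (ne_of_gt (by nlinarith)) (by norm_num : (4:ℝ) ≠ 0)]
    linear_combination -hs2
  have t4 : 1/((s + n - 2)/4 - ((m:ℤ):ℝ)) = s + (n:ℝ) := by
    push_cast
    have h : (s + n - 2)/4 - (m:ℝ) = (s - n)/4 := by rw [hmr]; ring
    rw [h, one_div_div, div_eq_iff (ne_of_gt (by nlinarith : (0:ℝ) < s - n))]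
    linear_combination -hs2
  have t5 : 1/(s + (n:ℝ) - (((2*(n:ℤ) : ℤ)) : ℝ)) = (s + n)/4 := by
    push_cast
    have h : s + (n:ℝ) - 2*(n:ℝ) = s - n := by ring
    rw [h, div_eq_div_iff (ne_of_gt (by nlinarith : (0:ℝ) < s - n)) (by norm_num : (4:ℝ) ≠ 0)]
    linear_combination -hs2
  -- step lemma
  have step : ∀ j : ℕ, ∀ y : ℝ, ∀ a : ℤ, cfX s j = y → ⌊y⌋ = a → y - (a:ℝ) ≠ 0 →
      cfX s (j+1) = 1/(y - (a:ℝ)) := by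
    intro j y a h1 h2 h3
    rw [cfX_succ_s11, h1, h2, if_neg h3]
  have hx0 : cfX s 0 = s := rfl
  -- the chain from any index with value (s+n)/4
  have chain : ∀ j : ℕ, cfX s j = (s + n)/4 →
      cfX s (j+1) = (s + n - 2)/n ∧ cfX s (j+2) = (s + 2)/n ∧
      cfX s (j+3) = (s + n - 2)/4 ∧ cfX s (j+4) = s + (n:ℝ) ∧
      cfX s (j+5) = (s + n)/4 := by
    intro j h1
    have h2 : cfX s (j+1) = (s + n - 2)/n := by rw [step j _ _ h1 f1 d1, t1]
    have h3 : cfX s (j+2) = (s + 2)/n := by rw [step (j+1) _ _ h2 f2 d2, t2]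
    have h4 : cfX s (j+3) = (s + n - 2)/4 := by rw [step (j+2) _ _ h3 f3 d3, t3]
    have h5 : cfX s (j+4) = s + (n:ℝ) := by rw [step (j+3) _ _ h4 f4 d4, t4]
    have h6 : cfX s (j+5) = (s + n)/4 := by rw [step (j+4) _ _ h5 f5 d5, t5]
    exact ⟨h2, h3, h4, h5, h6⟩
  have hx1 : cfX s 1 = (s + n)/4 := by rw [step 0 _ _ hx0 f0 d0, t0]
  -- value at each residue
  have key : ∀ k : ℕ, cfX s (5*k+1) = (s + n)/4 := by
    intro k
    induction k with
    | zero => simpa using hx1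
    | succ k ih =>
      have h := (chain _ ih).2.2.2.2
      have e : 5*k+1+5 = 5*(k+1)+1 := by ring
      rwa [e] at h
  have all5 : ∀ k : ℕ, cfX s (5*k+1) = (s + n)/4 ∧ cfX s (5*k+2) = (s + n - 2)/n ∧
      cfX s (5*k+3) = (s + 2)/n ∧ cfX s (5*k+4) = (s + n - 2)/4 ∧
      cfX s (5*k+5) = s + (n:ℝ) := by
    intro k
    obtain ⟨h2, h3, h4, h5, _⟩ := chain _ (key k)
    exact ⟨key k, h2, h3, h4, h5⟩
  have hm2 : ((n - 1) / 2 : ℕ) = m := by omega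
  -- cfA values
  have cA : ∀ k : ℕ, cfA s (5*k+1) = (m:ℤ) ∧ cfA s (5*k+2) = 1 ∧ cfA s (5*k+3) = 1 ∧
      cfA s (5*k+4) = (m:ℤ) ∧ cfA s (5*k+5) = 2*(n:ℤ) := by
    intro k
    obtain ⟨h1, h2, h3, h4, h5⟩ := all5 k
    exact ⟨by rw [cfA, h1, f1], by rw [cfA, h2, f2], by rw [cfA, h3, f3],
      by rw [cfA, h4, f4], by rw [cfA, h5, f5]⟩
  refine ⟨by rw [cfA, hx0, f0], ?_, ?_⟩
  · intro k
    obtain ⟨h1, h2, h3, h4, h5⟩ := cA k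
    rw [hm2]
    exact ⟨h1, h2, h3, h4, by exact_mod_cast h5⟩
  · set S := {p : ℕ | 0 < p ∧ ∀ m : ℕ, 1 ≤ m → cfA s (m + p) = cfA s m} with hS
    have h5S : (5:ℕ) ∈ S := by
      refine ⟨by norm_num, ?_⟩
      intro j hj
      obtain ⟨k, r, hr, hjj⟩ : ∃ k r, r < 5 ∧ j = 5*k + (r+1) :=
        ⟨(j-1)/5, (j-1)%5, Nat.mod_lt _ (by norm_num), by omega⟩
      subst hjj
      have e : 5*k + (r+1) + 5 = 5*(k+1) + (r+1) := by ring
      rw [e]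
      obtain ⟨a1, a2, a3, a4, a5⟩ := all5 k
      obtain ⟨b1, b2, b3, b4, b5⟩ := all5 (k+1)
      interval_cases r
      · rw [cfA, cfA, a1, b1]
      · rw [cfA, cfA]; rw [show 5*k+(1+1) = 5*k+2 from rfl] at a2 ⊢
        rw [show 5*(k+1)+(1+1) = 5*(k+1)+2 from rfl, a2, b2]
      · rw [cfA, cfA, show 5*k+(2+1) = 5*k+3 from rfl, show 5*(k+1)+(2+1) = 5*(k+1)+3 from rfl,
          a3, b3]
      · rw [cfA, cfA, show 5*k+(3+1) = 5*k+4 from rfl, show 5*(k+1)+(3+1) = 5*(k+1)+4 from rfl,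
          a4, b4]
      · rw [cfA, cfA, show 5*k+(4+1) = 5*k+5 from rfl, show 5*(k+1)+(4+1) = 5*(k+1)+5 from rfl,
          a5, b5]
    have hne : S.Nonempty := ⟨5, h5S⟩
    have hmem := Nat.sInf_mem hne
    have hle : sInf S ≤ 5 := Nat.sInf_le h5S
    obtain ⟨hp0, hper⟩ := hmem
    obtain ⟨c1, c2, c3, c4, c5⟩ := cA 0
    norm_num at c1 c2 c3 c4 c5
    interval_cases h : (sInf S)
    · have h' := hper 4 (by norm_num)
      rw [show (4:ℕ)+1 = 5 from rfl, c5, c4] at h'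
      have : 2*n = m := by exact_mod_cast h'
      omega
    · have h' := hper 3 (by norm_num)
      rw [show (3:ℕ)+2 = 5 from rfl, c5, c3] at h'
      have : 2*n = 1 := by exact_mod_cast h'
      omega
    · have h' := hper 2 (by norm_num)
      rw [show (2:ℕ)+3 = 5 from rfl, c5, c2] at h'
      have : 2*n = 1 := by exact_mod_cast h'
      omega
    · have h' := hper 1 (by norm_num)
      rw [show (1:ℕ)+4 = 5 from rfl, c5, c1] at h'
      have : 2*n = m := by exact_mod_cast h'
      omega
    · rfl
end

section
/- Let n be an even positive integer. Then the continued fraction of √(n²+4) is [n; n/2, 2n repeated], with period of length 2. -/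
theorem cfX_add_s12 (x : ℝ) (k i : ℕ) : cfX x (k + i) = cfX (cfX x k) i := by
  induction i with
  | zero => rfl
  | succ i ih =>
    rw [← Nat.add_assoc]
    simp only [cfX, ih]

theorem cfX_one_of_floor_eq {y : ℝ} {a : ℤ} (ha : ⌊y⌋ = a) (hy : y ≠ a) :
    cfX y 1 = (y - a)⁻¹ := by
  simp only [cfX, ha, sub_eq_zero, hy, if_false, one_div]

theorem cfX_two_mul_of_cycle {y z : ℝ} (hyz : cfX y 1 = z) (hzy : cfX z 1 = y) (k : ℕ) :
    cfX y (2 * k) = y ∧ cfX y (2 * k + 1) = z := by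
  have heven : ∀ k, cfX y (2 * k) = y := by
    intro k
    induction k with
    | zero => rfl
    | succ k ih => rw [Nat.mul_succ, cfX_add_s12, ih, cfX_add_s12 y 1 1, hyz, hzy]
  exact ⟨heven k, by rw [cfX_add_s12, heven, hyz]⟩

theorem sInf_periods_eq_two {α : Type*} {a : ℕ → α} (hper : ∀ j, 1 ≤ j → a (j + 2) = a j)
    (h21 : a 2 ≠ a 1) :
    sInf {p : ℕ | 0 < p ∧ ∀ m : ℕ, 1 ≤ m → a (m + p) = a m} = 2 := by
  have h2 : 2 ∈ {p : ℕ | 0 < p ∧ ∀ m : ℕ, 1 ≤ m → a (m + p) = a m} := ⟨two_pos, hper⟩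
  refine le_antisymm (Nat.sInf_le h2) (le_csInf ⟨2, h2⟩ ?_)
  rintro p ⟨hp, hpper⟩
  by_contra! hp2
  obtain rfl : p = 1 := by omega
  exact h21 (hpper 1 le_rfl)

section SqrtSqAddFour

variable {n : ℕ}

theorem sqrt_sq_add_four_sub_mul_add (t : ℝ) : (√(t ^ 2 + 4) - t) * (√(t ^ 2 + 4) + t) = 4 := by
  have := Real.sq_sqrt (by positivity : (0 : ℝ) ≤ t ^ 2 + 4)
  nlinarith

theorem lt_sqrt_sq_add_four (t : ℝ) : t < √(t ^ 2 + 4) :=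
  lt_of_le_of_lt (le_abs_self t) (Real.lt_sqrt_of_sq_lt (by rw [sq_abs]; linarith))

theorem sqrt_sq_add_four_lt {t : ℝ} (ht : 3 / 2 < t) : √(t ^ 2 + 4) < t + 1 :=
  (Real.sqrt_lt' (by linarith)).2 (by nlinarith)

theorem inv_sqrt_sq_add_four_sub (t : ℝ) : (√(t ^ 2 + 4) - t)⁻¹ = (√(t ^ 2 + 4) + t) / 4 :=
  inv_eq_of_mul_eq_one_right <| by
    rw [← mul_div_assoc, sqrt_sq_add_four_sub_mul_add, div_self four_ne_zero]

theorem sqrt_sq_add_four_lt_natCast_add_one (hn : 2 ≤ n) : √((n : ℝ) ^ 2 + 4) < n + 1 := by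
  have : (2 : ℝ) ≤ n := by exact_mod_cast hn
  exact sqrt_sq_add_four_lt (by linarith)

theorem floor_sqrt_sq_add_four (hn : 2 ≤ n) : ⌊√((n : ℝ) ^ 2 + 4)⌋ = n := by
  rw [Int.floor_eq_iff, Int.cast_natCast]
  exact ⟨(lt_sqrt_sq_add_four _).le, sqrt_sq_add_four_lt_natCast_add_one hn⟩

theorem floor_sqrt_sq_add_four_add (hn : 2 ≤ n) : ⌊√((n : ℝ) ^ 2 + 4) + n⌋ = 2 * n := by
  have := lt_sqrt_sq_add_four (n : ℝ)
  have := sqrt_sq_add_four_lt_natCast_add_one hn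
  rw [Int.floor_eq_iff]
  push_cast
  constructor <;> linarith

theorem floor_sqrt_sq_add_four_add_div_four (hn : 2 ≤ n) (heven : Even n) :
    ⌊(√((n : ℝ) ^ 2 + 4) + n) / 4⌋ = (n / 2 : ℕ) := by
  have := lt_sqrt_sq_add_four (n : ℝ)
  have := sqrt_sq_add_four_lt_natCast_add_one hn
  rw [Int.floor_eq_iff, Int.cast_natCast, Nat.cast_div_charZero heven.two_dvd, Nat.cast_ofNat]
  constructor <;> linarith

theorem cfX_sqrt_sq_add_four_one (hn : 2 ≤ n) :
    cfX √((n : ℝ) ^ 2 + 4) 1 = (√((n : ℝ) ^ 2 + 4) + n) / 4 := by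
  rw [cfX_one_of_floor_eq (floor_sqrt_sq_add_four hn), Int.cast_natCast, inv_sqrt_sq_add_four_sub]
  exact (lt_sqrt_sq_add_four _).ne'

theorem cfX_sqrt_sq_add_four_add_one (hn : 2 ≤ n) :
    cfX (√((n : ℝ) ^ 2 + 4) + n) 1 = (√((n : ℝ) ^ 2 + 4) + n) / 4 := by
  have := lt_sqrt_sq_add_four (n : ℝ)
  rw [cfX_one_of_floor_eq (floor_sqrt_sq_add_four_add hn)]
  · push_cast
    rw [show √((n : ℝ) ^ 2 + 4) + n - 2 * n = √((n : ℝ) ^ 2 + 4) - n by ring,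
      inv_sqrt_sq_add_four_sub]
  · push_cast
    linarith

theorem cfX_sqrt_sq_add_four_add_div_four_one (hn : 2 ≤ n) (heven : Even n) :
    cfX ((√((n : ℝ) ^ 2 + 4) + n) / 4) 1 = √((n : ℝ) ^ 2 + 4) + n := by
  have := lt_sqrt_sq_add_four (n : ℝ)
  rw [cfX_one_of_floor_eq (floor_sqrt_sq_add_four_add_div_four hn heven), Int.cast_natCast,
    Nat.cast_div_charZero heven.two_dvd, Nat.cast_ofNat]
  · rw [show (√((n : ℝ) ^ 2 + 4) + n) / 4 - n / 2 = (√((n : ℝ) ^ 2 + 4) - n) / 4 by ring, inv_div,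
      div_eq_mul_inv, inv_sqrt_sq_add_four_sub, mul_div_cancel₀ _ four_ne_zero]
  · rw [Int.cast_natCast, Nat.cast_div_charZero heven.two_dvd, Nat.cast_ofNat]
    linarith

end SqrtSqAddFour

/-- For even positive `n`, `√(n²+4) = [n; n/2, 2n repeated]`, with period of length 2. -/
theorem sqrt_sq_add_four_even (n : ℕ) (hn : 0 < n) (heven : Even n) :
    cfA (Real.sqrt ((n : ℝ) ^ 2 + 4)) 0 = n ∧
    (∀ k : ℕ,
      cfA (Real.sqrt ((n : ℝ) ^ 2 + 4)) (2 * k + 1) = (n / 2 : ℕ) ∧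
      cfA (Real.sqrt ((n : ℝ) ^ 2 + 4)) (2 * k + 2) = 2 * n) ∧
    sInf {p : ℕ | 0 < p ∧ ∀ m : ℕ, 1 ≤ m →
      cfA (Real.sqrt ((n : ℝ) ^ 2 + 4)) (m + p) = cfA (Real.sqrt ((n : ℝ) ^ 2 + 4)) m} = 2 := by
  have h2 : 2 ≤ n := by obtain ⟨m, rfl⟩ := heven; omega
  have hcycle := cfX_two_mul_of_cycle (cfX_sqrt_sq_add_four_add_div_four_one h2 heven)
    (cfX_sqrt_sq_add_four_add_one h2)
  have hquot : ∀ k : ℕ,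
      cfA √((n : ℝ) ^ 2 + 4) (2 * k + 1) = (n / 2 : ℕ) ∧
      cfA √((n : ℝ) ^ 2 + 4) (2 * k + 2) = 2 * n := by
    intro k
    rw [cfA, cfA, Nat.add_comm _ 1, cfX_add_s12, cfX_sqrt_sq_add_four_one h2, (hcycle k).1,
      show 2 * k + 2 = 1 + (2 * k + 1) by ring, cfX_add_s12, cfX_sqrt_sq_add_four_one h2, (hcycle k).2]
    exact ⟨floor_sqrt_sq_add_four_add_div_four h2 heven, floor_sqrt_sq_add_four_add h2⟩
  have hper : ∀ j, 1 ≤ j → cfX √((n : ℝ) ^ 2 + 4) (j + 2) = cfX √((n : ℝ) ^ 2 + 4) j := by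
    intro j hj
    obtain ⟨i, rfl⟩ := Nat.exists_eq_add_of_le hj
    rw [Nat.add_assoc, Nat.add_comm i 2, cfX_add_s12, cfX_add_s12 _ 2, cfX_add_s12, cfX_sqrt_sq_add_four_one h2,
      (hcycle 1).1]
  refine ⟨floor_sqrt_sq_add_four h2, hquot, sInf_periods_eq_two (fun j hj => ?_) ?_⟩
  · rw [cfA, cfA, hper j hj]
  · rw [(hquot 0).2, (hquot 0).1]
    omega
end

section
/- For every odd integer n > 3, the continued fraction of √(n²+2n-3) is [n; 1, (n-3)/2, 1, 2n repeated], so its period has length 4. -/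
theorem cfX_succ_eq_of_floor_eq {x y z : ℝ} {k : ℕ} {a : ℤ} (hk : cfX x k = y)
    (ha : ⌊y⌋ = a) (hz : (y - a) * z = 1) : cfX x (k + 1) = z := by
  have hy : y - a ≠ 0 := left_ne_zero_of_mul_eq_one hz
  rw [cfX, hk, ha, if_neg hy, one_div, inv_eq_of_mul_eq_one_right hz]

theorem cfX_succ_eq_of_eq {x : ℝ} {i j : ℕ} (h : cfX x i = cfX x j) :
    cfX x (i + 1) = cfX x (j + 1) := by
  rw [cfX, cfX, h]

theorem cfX_add_mul_eq_of_add_eq {x : ℝ} {k p : ℕ} (h : cfX x (k + p) = cfX x k) {i : ℕ}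
    (hi : k ≤ i) (t : ℕ) : cfX x (i + p * t) = cfX x i := by
  have hstep : ∀ i, k ≤ i → cfX x (i + p) = cfX x i := by
    intro i hi
    induction i, hi using Nat.le_induction with
    | base => exact h
    | succ i _ ih => rw [Nat.add_right_comm]; exact cfX_succ_eq_of_eq ih
  induction t with
  | zero => rfl
  | succ t ih => rw [Nat.mul_succ, ← Nat.add_assoc, hstep _ (by omega), ih]

theorem cfA_add_mul_eq_of_add_eq {x : ℝ} {k p : ℕ} (h : cfX x (k + p) = cfX x k) {i : ℕ}
    (hi : k ≤ i) (t : ℕ) : cfA x (i + p * t) = cfA x i :=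
  congrArg Int.floor (cfX_add_mul_eq_of_add_eq h hi t)

theorem sInf_periods_eq_of_ne {α : Type*} {f : ℕ → α} {p : ℕ} (hp : 0 < p)
    (hper : ∀ m, 1 ≤ m → f (m + p) = f m) (hne : ∀ j, 1 ≤ j → j < p → f j ≠ f p) :
    sInf {q : ℕ | 0 < q ∧ ∀ m, 1 ≤ m → f (m + q) = f m} = p := by
  refine le_antisymm (Nat.sInf_le ⟨hp, hper⟩) (le_csInf ⟨p, hp, hper⟩ ?_)
  rintro q ⟨hq, hqper⟩
  by_contra! hlt
  exact hne (p - q) (by omega) (by omega) (by simpa [Nat.sub_add_cancel hlt.le] using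
    (hqper (p - q) (by omega)).symm)

theorem sqrt_sq_add_two_mul_sub_three_mem_Ioo {n : ℝ} (hn : 2 ≤ n) :
    √(n ^ 2 + (2 * n - 3)) ∈ Set.Ioo n (n + 1) := by
  constructor
  · rw [Real.lt_sqrt (by linarith)]; linarith
  · rw [Real.sqrt_lt' (by linarith)]; linarith

theorem floor_div_eq_of_mul_le_of_lt_mul {y c : ℝ} {a : ℤ} (hc : 0 < c) (hlo : a * c ≤ y)
    (hhi : y < (a + 1) * c) : ⌊y / c⌋ = a := by
  rw [Int.floor_eq_iff, le_div_iff₀ hc, div_lt_iff₀ hc]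
  exact ⟨hlo, hhi⟩

section CompleteQuotients

variable {n m : ℕ} {x : ℝ}

theorem floor_complete_quotients (hm : 1 ≤ m) (hnm : (n : ℝ) = 2 * m + 3) (hlo : n < x)
    (hhi : x < n + 1) :
    ⌊x⌋ = n ∧ ⌊(x + n) / (2 * n - 3)⌋ = 1 ∧ ⌊(x + n - 3) / 4⌋ = m ∧
      ⌊(x + n - 3) / (2 * n - 3)⌋ = 1 ∧ ⌊x + n⌋ = 2 * n := by
  have hm' : (1 : ℝ) ≤ m := by exact_mod_cast hm
  have hc : (0 : ℝ) < 2 * n - 3 := by linarith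
  refine ⟨?_, ?_, ?_, ?_, ?_⟩
  · rw [Int.floor_eq_iff]; push_cast; constructor <;> linarith
  · exact floor_div_eq_of_mul_le_of_lt_mul hc (by push_cast; linarith) (by push_cast; linarith)
  · exact floor_div_eq_of_mul_le_of_lt_mul four_pos (by push_cast; linarith)
      (by push_cast; linarith)
  · exact floor_div_eq_of_mul_le_of_lt_mul hc (by push_cast; linarith) (by push_cast; linarith)
  · rw [Int.floor_eq_iff]; push_cast; constructor <;> linarith

theorem cfX_complete_quotients (hm : 1 ≤ m) (hnm : (n : ℝ) = 2 * m + 3)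
    (hx : x ^ 2 = n ^ 2 + (2 * n - 3)) (hlo : n < x) (hhi : x < n + 1) :
    cfX x 1 = (x + n) / (2 * n - 3) ∧ cfX x 2 = (x + n - 3) / 4 ∧
      cfX x 3 = (x + n - 3) / (2 * n - 3) ∧ cfX x 4 = x + n ∧ cfX x (1 + 4) = cfX x 1 := by
  obtain ⟨f0, f1, f2, f3, f4⟩ := floor_complete_quotients hm hnm hlo hhi
  have hc : (2 * n - 3 : ℝ) ≠ 0 := by linarith
  have e1 : cfX x 1 = (x + n) / (2 * n - 3) := cfX_succ_eq_of_floor_eq (y := x) rfl f0 (by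
    rw [Int.cast_natCast, mul_div_assoc', div_eq_one_iff_eq hc]; linear_combination hx)
  have e2 : cfX x 2 = (x + n - 3) / 4 := cfX_succ_eq_of_floor_eq e1 f1 (by
    rw [Int.cast_one, div_sub_one hc, div_mul_div_comm, div_eq_one_iff_eq (by positivity)]
    linear_combination hx)
  have e3 : cfX x 3 = (x + n - 3) / (2 * n - 3) := cfX_succ_eq_of_floor_eq e2 f2 (by
    rw [Int.cast_natCast, div_sub' (by norm_num), div_mul_div_comm,
      div_eq_one_iff_eq (by positivity)]
    linear_combination hx + 2 * (x + n - 3) * hnm)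
  have e4 : cfX x 4 = x + n := cfX_succ_eq_of_floor_eq e3 f3 (by
    rw [Int.cast_one, div_sub_one hc, div_mul_eq_mul_div, div_eq_one_iff_eq hc]
    linear_combination hx)
  have e5 : cfX x 5 = cfX x 1 := cfX_succ_eq_of_floor_eq e4 f4 (by
    rw [e1]; push_cast; rw [mul_div_assoc', div_eq_one_iff_eq hc]; linear_combination hx)
  exact ⟨e1, e2, e3, e4, e5⟩

end CompleteQuotients

/-- For odd `n > 3`, `√(n²+2n-3) = [n; 1, (n-3)/2, 1, 2n repeated]`,
with period of length 4. -/
theorem sqrt_sq_add_two_n_sub_three_odd (n : ℕ) (hn : 3 < n) (hodd : Odd n) :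
    cfA (Real.sqrt ((n : ℝ) ^ 2 + (2 * (n : ℝ) - 3))) 0 = n ∧
    (∀ k : ℕ,
      cfA (Real.sqrt ((n : ℝ) ^ 2 + (2 * (n : ℝ) - 3))) (4 * k + 1) = 1 ∧
      cfA (Real.sqrt ((n : ℝ) ^ 2 + (2 * (n : ℝ) - 3))) (4 * k + 2) = ((n - 3) / 2 : ℕ) ∧
      cfA (Real.sqrt ((n : ℝ) ^ 2 + (2 * (n : ℝ) - 3))) (4 * k + 3) = 1 ∧
      cfA (Real.sqrt ((n : ℝ) ^ 2 + (2 * (n : ℝ) - 3))) (4 * k + 4) = 2 * n) ∧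
    sInf {p : ℕ | 0 < p ∧ ∀ m : ℕ, 1 ≤ m →
      cfA (Real.sqrt ((n : ℝ) ^ 2 + (2 * (n : ℝ) - 3))) (m + p) = cfA (Real.sqrt ((n : ℝ) ^ 2 + (2 * (n : ℝ) - 3))) m} = 4 := by
  set x := √((n : ℝ) ^ 2 + (2 * (n : ℝ) - 3))
  set m := (n - 3) / 2
  have hm : 1 ≤ m := by obtain ⟨j, rfl⟩ := hodd; omega
  have hnm : (n : ℝ) = 2 * m + 3 := by obtain ⟨j, rfl⟩ := hodd; norm_cast; omega
  obtain ⟨hlo, hhi⟩ := sqrt_sq_add_two_mul_sub_three_mem_Ioo (n := n) (by linarith)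
  have hx : x ^ 2 = n ^ 2 + (2 * n - 3) := Real.sq_sqrt (by nlinarith)
  obtain ⟨f0, f1, f2, f3, f4⟩ := floor_complete_quotients hm hnm hlo hhi
  obtain ⟨e1, e2, e3, e4, e5⟩ := cfX_complete_quotients hm hnm hx hlo hhi
  have a1 : cfA x 1 = 1 := by rw [cfA, e1, f1]
  have a2 : cfA x 2 = m := by rw [cfA, e2, f2]
  have a3 : cfA x 3 = 1 := by rw [cfA, e3, f3]
  have a4 : cfA x 4 = 2 * n := by rw [cfA, e4, f4]
  have hper (i : ℕ) (hi : 1 ≤ i) (t : ℕ) : cfA x (i + 4 * t) = cfA x i :=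
    cfA_add_mul_eq_of_add_eq e5 hi t
  refine ⟨f0, fun k => ?_, sInf_periods_eq_of_ne four_pos (fun i hi => hper i hi 1) ?_⟩
  · rw [add_comm (4 * k) 1, add_comm (4 * k) 2, add_comm (4 * k) 3, add_comm (4 * k) 4,
      hper 1 le_rfl, hper 2 (by norm_num), hper 3 (by norm_num), hper 4 (by norm_num)]
    exact ⟨a1, a2, a3, a4⟩
  · intro j hj hj4
    interval_cases j <;> omega
end

section
/- For every even integer n > 3, the continued fraction of √(n²+2n-3) is [n; 1, n/2 - 1, 2, n/2 - 1, 1, 2n repeated], so its period has length 6. -/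
/-- For even `n > 3`, `√(n²+2n-3) = [n; 1, n/2-1, 2, n/2-1, 1, 2n repeated]`,
with period of length 6. -/
theorem sqrt_sq_add_two_n_sub_three_even (n : ℕ) (hn : 3 < n) (heven : Even n) :
    cfA (Real.sqrt ((n : ℝ) ^ 2 + (2 * (n : ℝ) - 3))) 0 = n ∧
    (∀ k : ℕ,
      cfA (Real.sqrt ((n : ℝ) ^ 2 + (2 * (n : ℝ) - 3))) (6 * k + 1) = 1 ∧
      cfA (Real.sqrt ((n : ℝ) ^ 2 + (2 * (n : ℝ) - 3))) (6 * k + 2) = (n / 2 - 1 : ℕ) ∧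
      cfA (Real.sqrt ((n : ℝ) ^ 2 + (2 * (n : ℝ) - 3))) (6 * k + 3) = 2 ∧
      cfA (Real.sqrt ((n : ℝ) ^ 2 + (2 * (n : ℝ) - 3))) (6 * k + 4) = (n / 2 - 1 : ℕ) ∧
      cfA (Real.sqrt ((n : ℝ) ^ 2 + (2 * (n : ℝ) - 3))) (6 * k + 5) = 1 ∧
      cfA (Real.sqrt ((n : ℝ) ^ 2 + (2 * (n : ℝ) - 3))) (6 * k + 6) = 2 * n) ∧
    sInf {p : ℕ | 0 < p ∧ ∀ m : ℕ, 1 ≤ m →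
      cfA (Real.sqrt ((n : ℝ) ^ 2 + (2 * (n : ℝ) - 3))) (m + p) = cfA (Real.sqrt ((n : ℝ) ^ 2 + (2 * (n : ℝ) - 3))) m} = 6 := by
  have hn4 : 4 ≤ n := by omega
  obtain ⟨m, hm⟩ := heven
  have hm2 : 2 ≤ m := by omega
  set t : ℝ := Real.sqrt ((n : ℝ) ^ 2 + (2 * (n : ℝ) - 3)) with htdef
  have hN4 : (4:ℝ) ≤ (n:ℝ) := by exact_mod_cast hn4
  have hD0 : (0:ℝ) ≤ (n : ℝ) ^ 2 + (2 * (n : ℝ) - 3) := by nlinarith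
  have ht2 : t ^ 2 = (n : ℝ) ^ 2 + (2 * (n : ℝ) - 3) := Real.sq_sqrt hD0
  have ht0 : 0 ≤ t := Real.sqrt_nonneg _
  have htl : (n:ℝ) < t := by nlinarith
  have htu : t < (n:ℝ) + 1 := by nlinarith
  have hz4 : 4 ≤ (n:ℤ) := by exact_mod_cast hn4
  have hz : (n:ℤ) = 2*(m:ℤ) := by omega
  have hmz : 2 ≤ (m:ℤ) := by exact_mod_cast hm2
  have hmR : (n:ℝ) = 2*(m:ℝ) := by exact_mod_cast hz
  have hno : ∀ p' : ℤ, t ≠ (p':ℝ) := by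
    intro p' hp
    have h1' : (n:ℤ) < p' := by exact_mod_cast hp ▸ htl
    have h2' : (p':ℝ) < ((n:ℤ):ℝ) + 1 := by rw [← hp]; exact_mod_cast htu
    have h2'' : p' < (n:ℤ) + 1 := by exact_mod_cast h2'
    omega
  have hstep : ∀ (k : ℕ) (p q a Q' : ℤ), 0 < q → 0 < Q' →
      q * Q' = (n:ℤ)^2 + 2*(n:ℤ) - 3 - (a*q - p)^2 →
      ((a*q - p : ℤ) : ℝ) ≤ (n:ℝ) → ((n:ℝ)+1) ≤ (((a+1)*q - p : ℤ) : ℝ) →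
      cfX t k = (t + (p:ℝ))/(q:ℝ) →
      ⌊cfX t k⌋ = a ∧ cfX t (k+1) = (t + ((a*q - p : ℤ):ℝ))/((Q' : ℤ):ℝ) := by
    intro k p q a Q' hq hQ' hint h1 h2 hx
    have hqR : (0:ℝ) < (q:ℝ) := by exact_mod_cast hq
    have hQR : (0:ℝ) < (Q':ℝ) := by exact_mod_cast hQ'
    have hfl : ⌊cfX t k⌋ = a := by
      rw [hx, Int.floor_eq_iff]
      push_cast at h1 h2 ⊢
      constructor
      · rw [le_div_iff₀ hqR]; nlinarith
      · rw [div_lt_iff₀ hqR]; nlinarith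
    have hne : t - ((a*q - p : ℤ):ℝ) ≠ 0 := sub_ne_zero.mpr (hno _)
    have hfrac : cfX t k - (⌊cfX t k⌋ : ℝ) = (t - ((a*q - p : ℤ):ℝ))/(q:ℝ) := by
      rw [hfl, hx]; field_simp; push_cast; ring
    refine ⟨hfl, ?_⟩
    have hu : cfX t (k+1) = 1 / (cfX t k - ⌊cfX t k⌋) := by
      simp only [cfX]
      rw [if_neg]
      rw [hfrac]
      exact div_ne_zero hne (ne_of_gt hqR)
    rw [hu, hfrac, one_div_div, div_eq_div_iff hne (ne_of_gt hQR)]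
    have hcast : (q:ℝ)*(Q':ℝ) = (n:ℝ)^2 + 2*(n:ℝ) - 3 - (((a*q - p : ℤ)):ℝ)^2 := by
      exact_mod_cast hint
    linear_combination hcast - ht2
  -- base step: from x0 = t
  have hx0 : cfX t 0 = (t + ((0:ℤ):ℝ))/((1:ℤ):ℝ) := by simp [cfX]
  obtain ⟨hfl0, hx1⟩ := hstep 0 0 1 (n:ℤ) (2*(n:ℤ)-3) (by omega) (by omega)
    (by ring) (by push_cast; linarith) (by push_cast; linarith) hx0
  rw [show ((n:ℤ)*1 - 0 : ℤ) = (n:ℤ) from by ring] at hx1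
  -- the six-step cycle
  have hsix : ∀ j : ℕ, cfX t j = (t + ((n:ℤ):ℝ))/((2*(n:ℤ)-3 : ℤ):ℝ) →
      ⌊cfX t j⌋ = 1 ∧ ⌊cfX t (j+1)⌋ = (m:ℤ)-1 ∧ ⌊cfX t (j+2)⌋ = 2 ∧
      ⌊cfX t (j+3)⌋ = (m:ℤ)-1 ∧ ⌊cfX t (j+4)⌋ = 1 ∧ ⌊cfX t (j+5)⌋ = 2*(n:ℤ) ∧
      cfX t (j+6) = (t + ((n:ℤ):ℝ))/((2*(n:ℤ)-3 : ℤ):ℝ) := by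
    intro j hxj
    obtain ⟨f1, g1⟩ := hstep j (n:ℤ) (2*(n:ℤ)-3) 1 4 (by omega) (by omega)
      (by ring) (by push_cast; linarith) (by push_cast; linarith) hxj
    rw [show (1*(2*(n:ℤ)-3) - (n:ℤ) : ℤ) = (n:ℤ)-3 from by ring] at g1
    obtain ⟨f2, g2⟩ := hstep (j+1) ((n:ℤ)-3) 4 ((m:ℤ)-1) ((n:ℤ)-1) (by omega) (by omega)
      (by rw [hz]; ring) (by push_cast; rw [hmR]; linarith) (by push_cast; rw [hmR]; linarith) g1
    rw [show (((m:ℤ)-1)*4 - ((n:ℤ)-3) : ℤ) = (n:ℤ)-1 from by rw [hz]; ring] at g2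
    obtain ⟨f3, g3⟩ := hstep (j+2) ((n:ℤ)-1) ((n:ℤ)-1) 2 4 (by omega) (by omega)
      (by ring) (by push_cast; linarith) (by push_cast; linarith) g2
    rw [show (2*((n:ℤ)-1) - ((n:ℤ)-1) : ℤ) = (n:ℤ)-1 from by ring] at g3
    obtain ⟨f4, g4⟩ := hstep (j+3) ((n:ℤ)-1) 4 ((m:ℤ)-1) (2*(n:ℤ)-3) (by omega) (by omega)
      (by rw [hz]; ring) (by push_cast; rw [hmR]; linarith) (by push_cast; rw [hmR]; linarith) g3
    rw [show (((m:ℤ)-1)*4 - ((n:ℤ)-1) : ℤ) = (n:ℤ)-3 from by rw [hz]; ring] at g4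
    obtain ⟨f5, g5⟩ := hstep (j+4) ((n:ℤ)-3) (2*(n:ℤ)-3) 1 1 (by omega) (by omega)
      (by ring) (by push_cast; linarith) (by push_cast; linarith) g4
    rw [show (1*(2*(n:ℤ)-3) - ((n:ℤ)-3) : ℤ) = (n:ℤ) from by ring] at g5
    obtain ⟨f6, g6⟩ := hstep (j+5) (n:ℤ) 1 (2*(n:ℤ)) (2*(n:ℤ)-3) (by omega) (by omega)
      (by ring) (by push_cast; linarith) (by push_cast; linarith) g5
    rw [show (2*(n:ℤ)*1 - (n:ℤ) : ℤ) = (n:ℤ) from by ring] at g6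
    exact ⟨f1, f2, f3, f4, f5, f6, by
      rw [show j+5+1 = j+6 from rfl] at g6; exact g6⟩
  have hone : ∀ k : ℕ, cfX t (6*k+1) = (t + ((n:ℤ):ℝ))/((2*(n:ℤ)-3 : ℤ):ℝ) := by
    intro k
    induction k with
    | zero => simpa using hx1
    | succ k ih =>
      have := (hsix (6*k+1) ih).2.2.2.2.2.2
      rw [show 6*k+1+6 = 6*(k+1)+1 from by ring] at this
      exact this
  have hcast2 : ((n / 2 - 1 : ℕ) : ℤ) = (m:ℤ) - 1 := by omega
  have P2 : ∀ k : ℕ,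
      cfA t (6 * k + 1) = 1 ∧ cfA t (6 * k + 2) = (n / 2 - 1 : ℕ) ∧
      cfA t (6 * k + 3) = 2 ∧ cfA t (6 * k + 4) = (n / 2 - 1 : ℕ) ∧
      cfA t (6 * k + 5) = 1 ∧ cfA t (6 * k + 6) = 2 * n := by
    intro k
    obtain ⟨f1, f2, f3, f4, f5, f6, -⟩ := hsix (6*k+1) (hone k)
    refine ⟨f1, ?_, ?_, ?_, ?_, ?_⟩
    · show ⌊cfX t (6*k+2)⌋ = _
      rw [show 6*k+2 = 6*k+1+1 from rfl, f2, hcast2]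
    · show ⌊cfX t (6*k+3)⌋ = _
      rw [show 6*k+3 = 6*k+1+2 from rfl, f3]
    · show ⌊cfX t (6*k+4)⌋ = _
      rw [show 6*k+4 = 6*k+1+3 from rfl, f4, hcast2]
    · show ⌊cfX t (6*k+5)⌋ = _
      rw [show 6*k+5 = 6*k+1+4 from rfl, f5]
    · show ⌊cfX t (6*k+6)⌋ = _
      rw [show 6*k+6 = 6*k+1+5 from rfl, f6]
  refine ⟨hfl0, P2, ?_⟩
  -- the period is 6
  have h6mem : 6 ∈ {p : ℕ | 0 < p ∧ ∀ m' : ℕ, 1 ≤ m' → cfA t (m' + p) = cfA t m'} := by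
    refine ⟨by norm_num, ?_⟩
    intro m' hm'
    obtain ⟨k, r, hr, rfl⟩ : ∃ k r, r < 6 ∧ m' = 6*k + r + 1 :=
      ⟨(m'-1)/6, (m'-1)%6, by omega, by omega⟩
    interval_cases r
    · rw [show 6*k+0+1+6 = 6*(k+1)+1 from by ring, (P2 (k+1)).1,
        show 6*k+0+1 = 6*k+1 from by ring, (P2 k).1]
    · rw [show 6*k+1+1+6 = 6*(k+1)+2 from by ring, (P2 (k+1)).2.1,
        show 6*k+1+1 = 6*k+2 from by ring, (P2 k).2.1]
    · rw [show 6*k+2+1+6 = 6*(k+1)+3 from by ring, (P2 (k+1)).2.2.1,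
        show 6*k+2+1 = 6*k+3 from by ring, (P2 k).2.2.1]
    · rw [show 6*k+3+1+6 = 6*(k+1)+4 from by ring, (P2 (k+1)).2.2.2.1,
        show 6*k+3+1 = 6*k+4 from by ring, (P2 k).2.2.2.1]
    · rw [show 6*k+4+1+6 = 6*(k+1)+5 from by ring, (P2 (k+1)).2.2.2.2.1,
        show 6*k+4+1 = 6*k+5 from by ring, (P2 k).2.2.2.2.1]
    · rw [show 6*k+5+1+6 = 6*(k+1)+6 from by ring, (P2 (k+1)).2.2.2.2.2,
        show 6*k+5+1 = 6*k+6 from by ring, (P2 k).2.2.2.2.2]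
  have hlb : ∀ p ∈ {p : ℕ | 0 < p ∧ ∀ m' : ℕ, 1 ≤ m' → cfA t (m' + p) = cfA t m'}, 6 ≤ p := by
    rintro p ⟨hp0, hp⟩
    by_contra hlt
    push_neg at hlt
    obtain ⟨a1, a2, a3, a4, a5, a6⟩ := P2 0
    simp only [Nat.mul_zero, Nat.zero_add] at a1 a2 a3 a4 a5 a6
    interval_cases p
    · have := hp 5 (by norm_num); rw [a6, a5] at this; omega
    · have := hp 4 (by norm_num); rw [show 4+2 = 6 from rfl, a6, a4] at this; omega
    · have := hp 3 (by norm_num); rw [show 3+3 = 6 from rfl, a6, a3] at this; omega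
    · have := hp 2 (by norm_num); rw [show 2+4 = 6 from rfl, a6, a2] at this; omega
    · have := hp 1 (by norm_num); rw [show 1+5 = 6 from rfl, a6, a1] at this; omega
  exact le_antisymm (Nat.sInf_le h6mem) (le_csInf ⟨6, h6mem⟩ hlb)
end

section
/- Let n = 5k+1 for some integer k ≥ 1, and set j = (4n+1)/5 (an integer). Then the continued fraction of √(n²+j) is [n; 2, 2, 2n repeated], with period of length 3. -/
set_option maxHeartbeats 1000000


lemma cfX_step (x : ℝ) (m : ℕ) (h : cfX x m - ⌊cfX x m⌋ ≠ 0) :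
    cfX x (m + 1) = 1 / (cfX x m - ⌊cfX x m⌋) := by
  rw [cfX, if_neg h]

/-- For `n = 5k+1`, `k ≥ 1`, and `j = (4n+1)/5`, the continued fraction of
`√(n²+j)` is `[n; 2, 2, 2n repeated]`, with period of length 3. -/
theorem sqrt_cf_period_three_family (n j k : ℕ) (hk : 1 ≤ k) (hn : n = 5 * k + 1)
    (hj : 5 * j = 4 * n + 1) :
    cfA (Real.sqrt ((n : ℝ) ^ 2 + (j : ℝ))) 0 = n ∧
    (∀ m : ℕ,
      cfA (Real.sqrt ((n : ℝ) ^ 2 + (j : ℝ))) (3 * m + 1) = 2 ∧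
      cfA (Real.sqrt ((n : ℝ) ^ 2 + (j : ℝ))) (3 * m + 2) = 2 ∧
      cfA (Real.sqrt ((n : ℝ) ^ 2 + (j : ℝ))) (3 * m + 3) = 2 * n) ∧
    sInf {p : ℕ | 0 < p ∧ ∀ m : ℕ, 1 ≤ m →
      cfA (Real.sqrt ((n : ℝ) ^ 2 + (j : ℝ))) (m + p) = cfA (Real.sqrt ((n : ℝ) ^ 2 + (j : ℝ))) m} = 3 := by
  have hj' : j = 4 * k + 1 := by omega
  subst hn hj'
  set s : ℝ := Real.sqrt (((5 * k + 1 : ℕ) : ℝ) ^ 2 + ((4 * k + 1 : ℕ) : ℝ)) with hs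
  set K : ℝ := (k : ℝ) with hKdef
  have hK1 : (1 : ℝ) ≤ K := by rw [hKdef]; exact_mod_cast hk
  have hD0 : (0 : ℝ) ≤ ((5 * k + 1 : ℕ) : ℝ) ^ 2 + ((4 * k + 1 : ℕ) : ℝ) := by positivity
  have hs2 : s ^ 2 = (5 * K + 1) ^ 2 + (4 * K + 1) := by
    rw [hs, Real.sq_sqrt hD0]; push_cast; ring
  have hs0 : 0 ≤ s := Real.sqrt_nonneg _
  have hlow : 5 * K + 1 < s := by nlinarith [hs2, hs0]
  have hupp : s < 5 * K + 2 := by nlinarith [hs2, hs0]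
  have hjpos : (0 : ℝ) < 4 * K + 1 := by linarith
  set y1 : ℝ := (s + (5 * K + 1)) / (4 * K + 1) with hy1
  set y2 : ℝ := (s + (3 * K + 1)) / (4 * K + 1) with hy2
  set y3 : ℝ := s + 5 * K + 1 with hy3
  -- floors
  have f0 : ⌊s⌋ = (5 * k + 1 : ℕ) := by
    rw [Int.floor_eq_iff]
    push_cast
    constructor <;> linarith
  have f1 : ⌊y1⌋ = 2 := by
    rw [Int.floor_eq_iff]
    rw [hy1]
    constructor
    · rw [le_div_iff₀ hjpos]; push_cast; nlinarith
    · rw [div_lt_iff₀ hjpos]; push_cast; nlinarith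
  have f2 : ⌊y2⌋ = 2 := by
    rw [Int.floor_eq_iff]
    rw [hy2]
    constructor
    · rw [le_div_iff₀ hjpos]; push_cast; nlinarith
    · rw [div_lt_iff₀ hjpos]; push_cast; nlinarith
  have f3 : ⌊y3⌋ = ((2 * (5 * k + 1) : ℕ) : ℤ) := by
    rw [Int.floor_eq_iff]
    rw [hy3]
    push_cast
    constructor <;> linarith
  -- fractional parts and step identities
  have hfrac0 : s - ((5 * k + 1 : ℕ) : ℝ) ≠ 0 := by push_cast; nlinarith
  have step0 : cfX s 1 = y1 := by
    have h0 : cfX s 0 = s := rfl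
    rw [cfX_step s 0 (by rw [h0, f0]; exact hfrac0), h0, f0]
    rw [hy1]
    rw [div_eq_div_iff (ne_of_gt (by push_cast; nlinarith)) hjpos.ne']
    push_cast
    nlinarith [hs2]
  have step1 : ∀ m, cfX s m = y1 → cfX s (m + 1) = y2 := by
    intro m hm
    have hne : cfX s m - ⌊cfX s m⌋ ≠ 0 := by
      rw [hm, f1]; rw [hy1]
      have : (0:ℝ) < (s + (5 * K + 1)) / (4 * K + 1) - 2 := by
        rw [sub_pos, lt_div_iff₀ hjpos]; nlinarith
      push_cast; linarith
    rw [cfX_step s m hne, hm, f1, hy2]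
    have h2 : y1 - ((2:ℤ):ℝ) = (s - (3 * K + 1)) / (4 * K + 1) := by
      rw [hy1]; push_cast; field_simp; ring
    rw [h2, one_div_div]
    rw [div_eq_div_iff (ne_of_gt (by nlinarith)) hjpos.ne']
    nlinarith [hs2]
  have step2 : ∀ m, cfX s m = y2 → cfX s (m + 1) = y3 := by
    intro m hm
    have hne : cfX s m - ⌊cfX s m⌋ ≠ 0 := by
      rw [hm, f2]; rw [hy2]
      have : (0:ℝ) < (s + (3 * K + 1)) / (4 * K + 1) - 2 := by
        rw [sub_pos, lt_div_iff₀ hjpos]; nlinarith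
      push_cast; linarith
    rw [cfX_step s m hne, hm, f2, hy3]
    have h2 : y2 - ((2:ℤ):ℝ) = (s - (5 * K + 1)) / (4 * K + 1) := by
      rw [hy2]; push_cast; field_simp; ring
    rw [h2, one_div_div]
    rw [div_eq_iff (by nlinarith)]
    nlinarith [hs2]
  have step3 : ∀ m, cfX s m = y3 → cfX s (m + 1) = y1 := by
    intro m hm
    have hne : cfX s m - ⌊cfX s m⌋ ≠ 0 := by
      rw [hm, f3]; rw [hy3]; push_cast; nlinarith
    rw [cfX_step s m hne, hm, f3, hy1]
    have h2 : y3 - (((2 * (5 * k + 1) : ℕ) : ℤ) : ℝ) = s - (5 * K + 1) := by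
      rw [hy3]; push_cast; ring
    rw [h2]
    rw [div_eq_div_iff (ne_of_gt (by nlinarith)) hjpos.ne']
    nlinarith [hs2]
  -- main induction
  have key : ∀ m : ℕ, cfX s (3 * m + 1) = y1 ∧ cfX s (3 * m + 2) = y2 ∧ cfX s (3 * m + 3) = y3 := by
    intro m
    induction m with
    | zero =>
      refine ⟨step0, step1 1 step0, step2 2 (step1 1 step0)⟩
    | succ p ih =>
      have e1 : cfX s (3 * (p + 1) + 1) = y1 := by
        have : 3 * (p + 1) + 1 = (3 * p + 3) + 1 := by ring
        rw [this]; exact step3 _ ih.2.2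
      have e2 : cfX s (3 * (p + 1) + 2) = y2 := by
        have h : 3 * (p + 1) + 2 = (3 * (p + 1) + 1) + 1 := by ring
        rw [h]; exact step1 _ e1
      have e3 : cfX s (3 * (p + 1) + 3) = y3 := by
        have h : 3 * (p + 1) + 3 = (3 * (p + 1) + 2) + 1 := by ring
        rw [h]; exact step2 _ e2
      exact ⟨e1, e2, e3⟩
  have a0 : cfA s 0 = ((5 * k + 1 : ℕ) : ℤ) := f0
  have aA : ∀ m, cfA s (3 * m + 1) = 2 := fun m => by
    rw [cfA, (key m).1, f1]
  have aB : ∀ m, cfA s (3 * m + 2) = 2 := fun m => by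
    rw [cfA, (key m).2.1, f2]
  have aC : ∀ m, cfA s (3 * m + 3) = ((2 * (5 * k + 1) : ℕ) : ℤ) := fun m => by
    rw [cfA, (key m).2.2, f3]
  refine ⟨a0, fun m => ⟨aA m, aB m, by push_cast [aC m]; ring⟩, ?_⟩
  -- the period
  have h3mem : 3 ∈ {p : ℕ | 0 < p ∧ ∀ m : ℕ, 1 ≤ m → cfA s (m + p) = cfA s m} := by
    refine ⟨by norm_num, fun m hm => ?_⟩
    obtain ⟨q, r, hr, rfl⟩ : ∃ q r, r < 3 ∧ m = 3 * q + r + 1 :=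
      ⟨(m - 1) / 3, (m - 1) % 3, Nat.mod_lt _ (by norm_num), by omega⟩
    interval_cases r
    · have h1 : 3 * q + 0 + 1 + 3 = 3 * (q + 1) + 1 := by ring
      rw [h1]; rw [aA (q + 1), aA q]
    · have h1 : 3 * q + 1 + 1 + 3 = 3 * (q + 1) + 2 := by ring
      have h2 : 3 * q + 1 + 1 = 3 * q + 2 := by ring
      rw [h1, h2, aB (q + 1), aB q]
    · have h1 : 3 * q + 2 + 1 + 3 = 3 * (q + 1) + 3 := by ring
      have h2 : 3 * q + 2 + 1 = 3 * q + 3 := by ring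
      rw [h1, h2, aC (q + 1), aC q]
  have hne : {p : ℕ | 0 < p ∧ ∀ m : ℕ, 1 ≤ m → cfA s (m + p) = cfA s m}.Nonempty := ⟨3, h3mem⟩
  have hle : sInf {p : ℕ | 0 < p ∧ ∀ m : ℕ, 1 ≤ m → cfA s (m + p) = cfA s m} ≤ 3 :=
    Nat.sInf_le h3mem
  have hmem := Nat.sInf_mem hne
  set P := sInf {p : ℕ | 0 < p ∧ ∀ m : ℕ, 1 ≤ m → cfA s (m + p) = cfA s m} with hP
  have hPpos : 0 < P := hmem.1
  have hn2 : ((2 * (5 * k + 1) : ℕ) : ℤ) ≠ 2 := by push_cast; omega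
  have c3 : cfA s 3 = ((2 * (5 * k + 1) : ℕ) : ℤ) := aC 0
  have c2 : cfA s 2 = 2 := aB 0
  have c1 : cfA s 1 = 2 := aA 0
  interval_cases P
  · exfalso
    have h : cfA s 3 = cfA s 2 := hmem.2 2 (by norm_num)
    rw [c3, c2] at h
    exact hn2 h
  · exfalso
    have h : cfA s 3 = cfA s 1 := hmem.2 1 (by norm_num)
    rw [c3, c1] at h
    exact hn2 h
  · rfl
end

section
/- Let n = 3k+2 for some integer k ≥ 0 and set j = (4n+1)/3 (an integer). Then the continued fraction of √(n²+j) is [n; 1, 1, 1, 2n repeated], with period of length 4. -/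
theorem cfX_add_eq_of_eq {x : ℝ} {a b : ℕ} (h : cfX x a = cfX x b) (t : ℕ) :
    cfX x (a + t) = cfX x (b + t) := by
  induction t with
  | zero => exact h
  | succ t ih => rw [← add_assoc, ← add_assoc, cfX, cfX, ih]

theorem cfX_periodic_of_eq {x : ℝ} {a p : ℕ} (h : cfX x (a + p) = cfX x a) :
    Function.Periodic (fun t => cfX x (a + t)) p := fun t => by
  simpa only [add_comm t p, ← add_assoc] using cfX_add_eq_of_eq h t

theorem cfA_add_mul_eq_of_cfX_eq {x : ℝ} {a p : ℕ} (h : cfX x (a + p) = cfX x a)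
    (t m : ℕ) :
    cfA x (a + t + p * m) = cfA x (a + t) := by
  rw [cfA, cfA, add_assoc, mul_comm]
  exact congrArg Int.floor ((cfX_periodic_of_eq h).nat_mul m t)

theorem cfX_succ_quadratic {x s D P Q P' Q' : ℝ} {m : ℕ} {a : ℤ}
    (hm : cfX x m = (s + P) / Q) (ha : cfA x m = a) (hs : s ^ 2 = D)
    (hQ : Q ≠ 0) (hQ' : Q' ≠ 0) (hP' : P' = a * Q - P) (hQQ' : Q * Q' = D - P' ^ 2) :
    cfX x (m + 1) = (s + P') / Q' := by
  rw [cfA, hm] at ha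
  have hsP' : s - P' ≠ 0 := fun h => mul_ne_zero hQ hQ' (by
    rw [hQQ', ← hs, sub_eq_zero.mp h, sub_self])
  have hfract : (s + P) / Q - a = (s - P') / Q := by
    rw [hP']; field_simp; ring
  rw [cfX, hm, ha, hfract, if_neg (div_ne_zero hsP' hQ), one_div_div,
    div_eq_div_iff hsP' hQ']
  linear_combination hQQ' - hs

theorem floor_div_eq_of_le_of_lt {y Q : ℝ} {a : ℤ} (hQ : 0 < Q) (h₁ : a * Q ≤ y)
    (h₂ : y < (a + 1) * Q) : ⌊y / Q⌋ = a := by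
  rw [Int.floor_eq_iff, le_div_iff₀ hQ, div_lt_iff₀ hQ]
  exact ⟨h₁, h₂⟩

theorem sInf_period_eq_four {α : Type*} {f : ℕ → α}
    (hper : ∀ m, 1 ≤ m → f (m + 4) = f m) (h₁ : f 1 ≠ f 4) (h₂ : f 2 ≠ f 4)
    (h₃ : f 3 ≠ f 4) :
    sInf {p : ℕ | 0 < p ∧ ∀ m, 1 ≤ m → f (m + p) = f m} = 4 := by
  have h₄ : 4 ∈ {p : ℕ | 0 < p ∧ ∀ m, 1 ≤ m → f (m + p) = f m} :=
    ⟨by norm_num, hper⟩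
  refine le_antisymm (Nat.sInf_le h₄) (le_csInf ⟨4, h₄⟩ ?_)
  rintro p ⟨hp, hfp⟩
  by_contra! hlt
  interval_cases p
  exacts [h₃ (hfp 3 (by norm_num)).symm, h₂ (hfp 2 (by norm_num)).symm,
    h₁ (hfp 1 le_rfl).symm]

theorem sqrt_family_expansion {n j : ℕ} {x : ℝ} (hj : 3 * j = 4 * n + 1) (hx₀ : 0 ≤ x)
    (hx : x ^ 2 = n ^ 2 + j) :
    cfA x 0 = n ∧ cfA x 1 = 1 ∧ cfA x 2 = 1 ∧ cfA x 3 = 1 ∧ cfA x 4 = 2 * n ∧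
      cfX x 5 = cfX x 1 := by
  have hjR : 3 * (j : ℝ) = 4 * n + 1 := by exact_mod_cast hj
  have hn : (1 : ℝ) ≤ n := by exact_mod_cast (by omega : 1 ≤ n)
  have hlo : (n : ℝ) < x := by nlinarith
  have hhi : x < n + 1 := by nlinarith
  have hj₀ : (0 : ℝ) < j := by linarith
  have hc₀ : (0 : ℝ) < j - n := by linarith
  have q₀ : cfX x 0 = (x + 0) / 1 := by rw [cfX, add_zero, div_one]
  have f₀ : cfA x 0 = n := by
    rw [cfA, q₀]
    exact floor_div_eq_of_le_of_lt one_pos (by push_cast; linarith) (by push_cast; linarith)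
  have q₁ : cfX x 1 = (x + n) / j :=
    cfX_succ_quadratic q₀ f₀ hx one_ne_zero hj₀.ne' (by push_cast; ring) (by ring)
  have f₁ : cfA x 1 = 1 := by
    rw [cfA, q₁]
    exact floor_div_eq_of_le_of_lt hj₀ (by push_cast; linarith) (by push_cast; linarith)
  have q₂ : cfX x 2 = (x + (j - n)) / (2 * (j - n)) :=
    cfX_succ_quadratic q₁ f₁ hx hj₀.ne' (by linarith) (by push_cast; ring)
      (by linear_combination (j : ℝ) * hjR)
  have f₂ : cfA x 2 = 1 := by
    rw [cfA, q₂]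
    exact floor_div_eq_of_le_of_lt (by linarith) (by push_cast; linarith) (by push_cast; linarith)
  have q₃ : cfX x 3 = (x + (j - n)) / j :=
    cfX_succ_quadratic q₂ f₂ hx (by linarith) hj₀.ne' (by push_cast; ring)
      (by linear_combination (j : ℝ) * hjR)
  have f₃ : cfA x 3 = 1 := by
    rw [cfA, q₃]
    exact floor_div_eq_of_le_of_lt hj₀ (by push_cast; linarith) (by push_cast; linarith)
  have q₄ : cfX x 4 = (x + n) / 1 :=
    cfX_succ_quadratic q₃ f₃ hx hj₀.ne' one_ne_zero (by push_cast; ring) (by ring)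
  have f₄ : cfA x 4 = 2 * n := by
    rw [cfA, q₄]
    exact floor_div_eq_of_le_of_lt one_pos (by push_cast; linarith) (by push_cast; linarith)
  have q₅ : cfX x 5 = (x + n) / j :=
    cfX_succ_quadratic q₄ f₄ hx one_ne_zero hj₀.ne' (by push_cast; ring) (by ring)
  exact ⟨f₀, f₁, f₂, f₃, f₄, q₅.trans q₁.symm⟩

theorem sqrt_cf_period_four_family_general (n j : ℕ)
    (hj : 3 * j = 4 * n + 1) :
    cfA (Real.sqrt ((n : ℝ) ^ 2 + (j : ℝ))) 0 = n ∧
    (∀ m : ℕ,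
      cfA (Real.sqrt ((n : ℝ) ^ 2 + (j : ℝ))) (4 * m + 1) = 1 ∧
      cfA (Real.sqrt ((n : ℝ) ^ 2 + (j : ℝ))) (4 * m + 2) = 1 ∧
      cfA (Real.sqrt ((n : ℝ) ^ 2 + (j : ℝ))) (4 * m + 3) = 1 ∧
      cfA (Real.sqrt ((n : ℝ) ^ 2 + (j : ℝ))) (4 * m + 4) = 2 * n) ∧
    sInf {p : ℕ | 0 < p ∧ ∀ m : ℕ, 1 ≤ m →
      cfA (Real.sqrt ((n : ℝ) ^ 2 + (j : ℝ))) (m + p) = cfA (Real.sqrt ((n : ℝ) ^ 2 + (j : ℝ))) m} = 4 := by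
  have hx₀ := Real.sqrt_nonneg ((n : ℝ) ^ 2 + j)
  have hx := Real.sq_sqrt (by positivity : (0 : ℝ) ≤ n ^ 2 + j)
  generalize Real.sqrt ((n : ℝ) ^ 2 + j) = x at hx₀ hx ⊢
  obtain ⟨h₀, h₁, h₂, h₃, h₄, h₅⟩ := sqrt_family_expansion hj hx₀ hx
  have hcycle (m r : ℕ) : cfA x (4 * m + (r + 1)) = cfA x (r + 1) := by
    rw [add_comm (4 * m), add_comm r]
    exact cfA_add_mul_eq_of_cfX_eq (p := 4) h₅ r m
  have h2n : (1 : ℤ) ≠ 2 * n := by omega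
  refine ⟨h₀, fun m => ⟨?_, ?_, ?_, ?_⟩, sInf_period_eq_four (fun m hm => ?_) ?_ ?_ ?_⟩
  · rw [hcycle m 0, h₁]
  · rw [hcycle m 1, h₂]
  · rw [hcycle m 2, h₃]
  · rw [hcycle m 3, h₄]
  · obtain ⟨r, rfl⟩ := Nat.exists_eq_add_of_le' hm
    simpa only [mul_one, add_comm] using hcycle 1 r
  all_goals simp only [h₁, h₂, h₃, h₄, h2n, ne_eq, not_false_eq_true]

/-- For `n = 3k+2`, `k ≥ 0`, and `j = (4n+1)/3`, the continued fraction of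
`√(n²+j)` is `[n; 1, 1, 1, 2n repeated]`, with period of length 4. -/
theorem sqrt_cf_period_four_family (n j k : ℕ) (hn : n = 3 * k + 2)
    (hj : 3 * j = 4 * n + 1) :
    cfA (Real.sqrt ((n : ℝ) ^ 2 + (j : ℝ))) 0 = n ∧
    (∀ m : ℕ,
      cfA (Real.sqrt ((n : ℝ) ^ 2 + (j : ℝ))) (4 * m + 1) = 1 ∧
      cfA (Real.sqrt ((n : ℝ) ^ 2 + (j : ℝ))) (4 * m + 2) = 1 ∧
      cfA (Real.sqrt ((n : ℝ) ^ 2 + (j : ℝ))) (4 * m + 3) = 1 ∧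
      cfA (Real.sqrt ((n : ℝ) ^ 2 + (j : ℝ))) (4 * m + 4) = 2 * n) ∧
    sInf {p : ℕ | 0 < p ∧ ∀ m : ℕ, 1 ≤ m →
      cfA (Real.sqrt ((n : ℝ) ^ 2 + (j : ℝ))) (m + p) = cfA (Real.sqrt ((n : ℝ) ^ 2 + (j : ℝ))) m} = 4 :=
  sqrt_cf_period_four_family_general n j hj
end

section
/- Let n = 3k+1 for some integer k ≥ 1 and set j = n+1. Then the continued fraction of √(n²+n+1) is [n; 1, 1, (2n-2)/3, 1, 1, 2n repeated], with period of length 6. -/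
lemma cfX_step_s18 (x : ℝ) (m : ℕ) (a : ℤ) (e : ℝ) (h1 : (a:ℝ) < cfX x m)
    (h2 : cfX x m < a + 1) (he : e * (cfX x m - a) = 1) :
    cfA x m = a ∧ cfX x (m+1) = e := by
  have hf : ⌊cfX x m⌋ = a := by
    rw [Int.floor_eq_iff]
    exact ⟨le_of_lt h1, h2⟩
  have hd : cfX x m - (a:ℝ) ≠ 0 := by linarith [sub_pos.mpr h1]
  refine ⟨hf, ?_⟩
  show (if cfX x m - ⌊cfX x m⌋ = 0 then 0 else 1 / (cfX x m - ⌊cfX x m⌋)) = e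
  rw [hf, if_neg hd, eq_comm, eq_div_iff hd]
  exact he

lemma cfX_congr (x : ℝ) (a b : ℕ) (h : cfX x a = cfX x b) : cfX x (a+1) = cfX x (b+1) := by
  show (if cfX x a - ⌊cfX x a⌋ = 0 then 0 else 1 / (cfX x a - ⌊cfX x a⌋)) =
       (if cfX x b - ⌊cfX x b⌋ = 0 then 0 else 1 / (cfX x b - ⌊cfX x b⌋))
  rw [h]

/-- For `n = 3k+1`, `k ≥ 1`, the continued fraction of `√(n²+n+1)` is
`[n; 1, 1, (2n-2)/3, 1, 1, 2n repeated]`, with period of length 6. -/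
theorem sqrt_cf_period_six_family (n k : ℕ) (hk : 1 ≤ k) (hn : n = 3 * k + 1) :
    cfA (Real.sqrt ((n : ℝ) ^ 2 + ((n : ℝ) + 1))) 0 = n ∧
    (∀ m : ℕ,
      cfA (Real.sqrt ((n : ℝ) ^ 2 + ((n : ℝ) + 1))) (6 * m + 1) = 1 ∧
      cfA (Real.sqrt ((n : ℝ) ^ 2 + ((n : ℝ) + 1))) (6 * m + 2) = 1 ∧
      cfA (Real.sqrt ((n : ℝ) ^ 2 + ((n : ℝ) + 1))) (6 * m + 3) = ((2 * n - 2) / 3 : ℕ) ∧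
      cfA (Real.sqrt ((n : ℝ) ^ 2 + ((n : ℝ) + 1))) (6 * m + 4) = 1 ∧
      cfA (Real.sqrt ((n : ℝ) ^ 2 + ((n : ℝ) + 1))) (6 * m + 5) = 1 ∧
      cfA (Real.sqrt ((n : ℝ) ^ 2 + ((n : ℝ) + 1))) (6 * m + 6) = 2 * n) ∧
    sInf {p : ℕ | 0 < p ∧ ∀ m : ℕ, 1 ≤ m →
      cfA (Real.sqrt ((n : ℝ) ^ 2 + ((n : ℝ) + 1))) (m + p) = cfA (Real.sqrt ((n : ℝ) ^ 2 + ((n : ℝ) + 1))) m} = 6 := by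
  set N : ℝ := (n : ℝ) with hNdef
  set x : ℝ := Real.sqrt (N ^ 2 + (N + 1)) with hxdef
  have hK : N = 3 * (k:ℝ) + 1 := by rw [hNdef, hn]; push_cast; ring
  have hk1 : (1:ℝ) ≤ (k:ℝ) := by exact_mod_cast hk
  have hN4 : (4:ℝ) ≤ N := by rw [hK]; linarith
  have hs2 : x ^ 2 = N ^ 2 + N + 1 := by
    rw [hxdef, Real.sq_sqrt (by nlinarith)]; ring
  have hslb : N < x := by
    rw [hxdef]
    have : N = Real.sqrt (N^2) := by rw [Real.sqrt_sq (by linarith)]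
    rw [this]
    apply Real.sqrt_lt_sqrt (by nlinarith)
    nlinarith
  have hsub : x < N + 1 := by
    rw [hxdef]
    rw [show N^2 + (N+1) = (N^2+N+1) by ring]
    rw [show N + 1 = Real.sqrt ((N+1)^2) by rw [Real.sqrt_sq (by linarith)]]
    apply Real.sqrt_lt_sqrt (by nlinarith)
    nlinarith
  have hx0 : cfX x 0 = x := rfl
  have dN : N ≠ 0 := by linarith
  have dN1 : N + (1:ℝ) ≠ 0 := by linarith
  have hs2k : x ^ 2 = (3*(k:ℝ)+1) ^ 2 + (3*(k:ℝ)+1) + 1 := by rw [← hK]; exact hs2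
  -- the block lemma
  have block : ∀ j : ℕ, cfX x j = (x + N) / (N + 1) →
      cfA x j = 1 ∧ cfA x (j+1) = 1 ∧ cfA x (j+2) = 2*(k:ℤ) ∧ cfA x (j+3) = 1 ∧
      cfA x (j+4) = 1 ∧ cfA x (j+5) = 2*(n:ℤ) ∧ cfX x (j+6) = (x + N) / (N + 1) := by
    intro j hj
    have d1 : (0:ℝ) < N + 1 := by linarith
    obtain ⟨a0, e1⟩ := cfX_step_s18 x j 1 ((x+1)/N)
      (by rw [hj]; push_cast; rw [lt_div_iff₀ d1]; linarith)
      (by rw [hj]; push_cast; rw [div_lt_iff₀ d1]; linarith)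
      (by rw [hj]; push_cast; field_simp; rw [hK]; linear_combination hs2k)
    obtain ⟨a1, e2⟩ := cfX_step_s18 x (j+1) 1 ((x+N-1)/3)
      (by rw [e1]; push_cast; rw [lt_div_iff₀ (by linarith)]; linarith)
      (by rw [e1]; push_cast; rw [div_lt_iff₀ (by linarith)]; linarith)
      (by rw [e1]; push_cast; field_simp; rw [hK]; linear_combination hs2k)
    obtain ⟨a2, e3⟩ := cfX_step_s18 x (j+2) (2*(k:ℤ)) ((x+N-1)/N)
      (by rw [e2]; push_cast; rw [lt_div_iff₀ (by norm_num : (0:ℝ) < 3)]; nlinarith [hK]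
        )
      (by rw [e2]; push_cast; rw [div_lt_iff₀ (by norm_num : (0:ℝ) < 3)]; nlinarith [hK])
      (by rw [e2]; push_cast; field_simp; rw [hK]; linear_combination hs2k)
    obtain ⟨a3, e4⟩ := cfX_step_s18 x (j+3) 1 ((x+1)/(N+1))
      (by rw [e3]; push_cast; rw [lt_div_iff₀ (by linarith)]; linarith)
      (by rw [e3]; push_cast; rw [div_lt_iff₀ (by linarith)]; linarith)
      (by rw [e3]; push_cast; field_simp; rw [hK]; linear_combination hs2k)
    obtain ⟨a4, e5⟩ := cfX_step_s18 x (j+4) 1 (x+N)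
      (by rw [e4]; push_cast; rw [lt_div_iff₀ d1]; linarith)
      (by rw [e4]; push_cast; rw [div_lt_iff₀ d1]; linarith)
      (by rw [e4]; push_cast; field_simp; rw [hK]; linear_combination hs2k)
    obtain ⟨a5, e6⟩ := cfX_step_s18 x (j+5) (2*(n:ℤ)) ((x+N)/(N+1))
      (by rw [e5]; push_cast; linarith)
      (by rw [e5]; push_cast; linarith)
      (by rw [e5]; push_cast; rw [← hNdef]; field_simp; rw [hK]; linear_combination hs2k)
    exact ⟨a0, a1, a2, a3, a4, a5, by rw [show j+6 = (j+5)+1 by ring] at e6 ⊢; exact e6⟩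
  -- step 0
  obtain ⟨a00, e01⟩ := cfX_step_s18 x 0 (n:ℤ) ((x+N)/(N+1))
    (by rw [hx0]; exact_mod_cast hslb)
    (by rw [hx0]; push_cast; linarith)
    (by rw [hx0]; push_cast; rw [← hNdef]; field_simp; rw [hK]; linear_combination hs2k)
  have e01' : cfX x 1 = (x + N) / (N + 1) := by simpa using e01
  have key : ∀ m : ℕ, cfX x (6*m+1) = (x + N) / (N + 1) := by
    intro m
    induction m with
    | zero => simpa using e01'
    | succ m ih =>
      have := (block _ ih).2.2.2.2.2.2
      rw [show 6*(m+1)+1 = (6*m+1)+6 by ring]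
      exact this
  have hblocks := fun m => block (6*m+1) (key m)
  have h23 : ((2 * n - 2) / 3 : ℕ) = (2*k : ℕ) := by omega
  refine ⟨a00, ?_, ?_⟩
  · intro m
    obtain ⟨b1, b2, b3, b4, b5, b6, _⟩ := hblocks m
    refine ⟨b1, ?_, ?_, ?_, ?_, ?_⟩
    · rw [show 6*m+2 = (6*m+1)+1 by ring]; exact b2
    · rw [show 6*m+3 = (6*m+1)+2 by ring, h23]; push_cast; exact b3
    · rw [show 6*m+4 = (6*m+1)+3 by ring]; exact b4
    · rw [show 6*m+5 = (6*m+1)+4 by ring]; exact b5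
    · rw [show 6*m+6 = (6*m+1)+5 by ring]; push_cast; exact b6
  · -- the infimum
    have hper : ∀ m : ℕ, 1 ≤ m → cfX x (m + 6) = cfX x m := by
      intro m hm
      obtain ⟨j, rfl⟩ : ∃ j, m = j + 1 := ⟨m - 1, by omega⟩
      clear hm
      induction j with
      | zero =>
        have h7 := (block 1 e01').2.2.2.2.2.2
        simpa using h7.trans e01'.symm
      | succ j ih =>
        have := cfX_congr x (j+1+6) (j+1) ih
        rw [show j+1+1+6 = (j+1+6)+1 by ring]
        exact this
    have h6mem : 6 ∈ {p : ℕ | 0 < p ∧ ∀ m : ℕ, 1 ≤ m → cfA x (m + p) = cfA x m} := by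
      refine ⟨by norm_num, fun m hm => ?_⟩
      unfold cfA
      rw [hper m hm]
    -- values of first few quotients
    obtain ⟨b1, b2, b3, b4, b5, b6, _⟩ := hblocks 0
    simp only [Nat.mul_zero, Nat.zero_add] at b1 b2 b3 b4 b5 b6
    norm_num at b2 b3 b4 b5 b6
    have hk2 : (2:ℤ) ≤ 2*(k:ℤ) := by
      have : (1:ℤ) ≤ (k:ℤ) := by exact_mod_cast hk
      linarith
    have hn8 : (8:ℤ) ≤ 2*(n:ℤ) := by
      have : (4:ℤ) ≤ (n:ℤ) := by rw [hn]; push_cast; omega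
      linarith
    have hkn : 2*(k:ℤ) ≠ 2*(n:ℤ) := by
      have : (k:ℤ) < (n:ℤ) := by rw [hn]; push_cast; omega
      omega
    apply le_antisymm
    · exact Nat.sInf_le h6mem
    · apply le_csInf ⟨6, h6mem⟩
      rintro p ⟨hp, hpval⟩
      by_contra hlt
      push_neg at hlt
      interval_cases p
      · have := hpval 2 (by norm_num); rw [show 2+1 = 3 by rfl, b3, b2] at this; omega
      · have := hpval 1 (by norm_num); rw [show 1+2 = 3 by rfl, b3, b1] at this; omega
      · have := hpval 3 (by norm_num); rw [show 3+3 = 6 by rfl, b6, b3] at this; omega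
      · have := hpval 2 (by norm_num); rw [show 2+4 = 6 by rfl, b6, b2] at this; omega
      · have := hpval 1 (by norm_num); rw [show 1+5 = 6 by rfl, b6, b1] at this; omega
end
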